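/- arXiv:1709.03487 — 9 statements merged into one kernel-verified Lean document; each statement's English description precedes it below -/
import Mathlib

section
/- Let 0 < s₀ < r₀ < 1 and let P be a compact packing with radii(P) = {s₀, r₀, 1}. Then for every circle D ∈ P and every neighbor cycle of D with associated angle-count ξ, the three numbers ξ·(2,0,0,1,1,0), ξ·(0,2,0,1,0,1) and ξ·(0,0,2,0,1,1) are all even. -/
open scoped BigOperators

noncomputable section

/-- The Euclidean plane. -/
abbrev Plane := EuclideanSpace ℝ (Fin 2)

/-- A circle in the plane: a center together with a positive radius. -/
structure Circle2 where
  center : Plane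
  radius : ℝ
  radius_pos : 0 < radius

/-- Two circles are tangent if the distance between their centers is the sum of radii. -/
def Tangent (S T : Circle2) : Prop :=
  dist S.center T.center = S.radius + T.radius

/-- A packing: the open discs bounded by distinct circles are pairwise disjoint. -/
def IsPacking (P : Set Circle2) : Prop :=
  ∀ S ∈ P, ∀ T ∈ P, S ≠ T →
    Disjoint (Metric.ball S.center S.radius) (Metric.ball T.center T.radius)

/-- A neighbor cycle of `S` in `P`: a family `A : ZMod n → Circle2` with `n ≥ 1`, consisting
of circles of `P`, each tangent to `S`, consecutive ones tangent, and exhausting all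
neighbors of `S` in `P`. -/
def IsNeighborCycle (P : Set Circle2) (S : Circle2) {n : ℕ} (A : ZMod n → Circle2) : Prop :=
  1 ≤ n ∧ (∀ i, A i ∈ P) ∧ (∀ i, Tangent S (A i)) ∧
  (∀ i, Tangent (A i) (A (i + 1))) ∧
  (∀ T ∈ P, Tangent S T → ∃ i, T = A i)

/-- A compact packing: a packing in which every circle has a neighbor cycle. -/
def IsCompactPacking (P : Set Circle2) : Prop :=
  IsPacking P ∧ ∀ S ∈ P, ∃ (n : ℕ) (A : ZMod n → Circle2), IsNeighborCycle P S A

/-- The set of radii of the circles of a packing. -/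
def radii (P : Set Circle2) : Set ℝ := Circle2.radius '' P

/-- The six target unordered pairs (as multisets) of radii:
{1,1}, {r₀,r₀}, {s₀,s₀}, {1,r₀}, {1,s₀}, {r₀,s₀}. -/
def pairTargets (r₀ s₀ : ℝ) : Fin 6 → Multiset ℝ :=
  ![{1, 1}, {r₀, r₀}, {s₀, s₀}, {1, r₀}, {1, s₀}, {r₀, s₀}]

/-- The angle-count of a neighbor cycle `A`: coordinate `k` counts the indices `i` for which
the unordered pair of radii of `A i` and `A (i+1)` is the `k`-th target pair. -/
def angleCount (r₀ s₀ : ℝ) {n : ℕ} (A : ZMod n → Circle2) : Fin 6 → ℕ :=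
  fun k => Set.ncard {i : ZMod n |
    ({(A i).radius, (A (i + 1)).radius} : Multiset ℝ) = pairTargets r₀ s₀ k}

/-- Dot product of two tuples in ℕ^6. -/
def dotNN (ξ v : Fin 6 → ℕ) : ℕ := ∑ i, ξ i * v i

/-- Dot product of a tuple in ℕ^6 with a vector in ℝ^6. -/
def dotNR (ξ : Fin 6 → ℕ) (v : Fin 6 → ℝ) : ℝ := ∑ i, (ξ i : ℝ) * v i

/-- The angle at the center of a circle of radius `a` formed by the centers of mutually
tangent circles of radii `b` and `c`. -/
def ang (a b c : ℝ) : ℝ :=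
  Real.arccos (((a + b) ^ 2 + (a + c) ^ 2 - (b + c) ^ 2) / (2 * (a + c) * (a + b)))

/-- The vector α(r,s) ∈ ℝ^6. -/
def alphaVec (r s : ℝ) : Fin 6 → ℝ :=
  ![ang s 1 1, ang s r r, ang s s s, ang s 1 r, ang s 1 s, ang s r s]

/-- The vector β(r,s) ∈ ℝ^6. -/
def betaVec (r s : ℝ) : Fin 6 → ℝ :=
  ![ang r 1 1, ang r r r, ang r s s, ang r 1 r, ang r 1 s, ang r r s]

/-- The vector γ(r,s) ∈ ℝ^6. -/
def gammaVec (r s : ℝ) : Fin 6 → ℝ :=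
  ![ang 1 1 1, ang 1 r r, ang 1 s s, ang 1 1 r, ang 1 1 s, ang 1 r s]

/-- Δ₃ = {(r,s) : 0 < s < r < 1}. -/
def Delta3 : Set (ℝ × ℝ) := {p | 0 < p.2 ∧ p.2 < p.1 ∧ p.1 < 1}

/-- Π₃ = pairs (r,s) with 0 < s < r < 1 admitting a compact packing with radii {s, r, 1}. -/
def Pi3 : Set (ℝ × ℝ) :=
  {p | 0 < p.2 ∧ p.2 < p.1 ∧ p.1 < 1 ∧
    ∃ P : Set Circle2, IsCompactPacking P ∧ radii P = {p.2, p.1, 1}}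

/-- Standard basis vector of ℕ^6. -/
def eb (i : Fin 6) : Fin 6 → ℕ := fun j => if j = i then 1 else 0

/-- The symmetric map κ : Fin 3 → Fin 3 → ℕ^6 sending (0,0),(1,1),(2,2),(0,1),(0,2),(1,2)
to e₁,e₂,e₃,e₄,e₅,e₆ respectively. -/
def kappa : Fin 3 → Fin 3 → (Fin 6 → ℕ) :=
  ![![eb 0, eb 3, eb 4], ![eb 3, eb 1, eb 5], ![eb 4, eb 5, eb 2]]

/-- Seq(η): η arises as the sum ∑_{j ∈ ZMod n} κ(σ(j), σ(j+1)) for some n ≥ 1 and σ. -/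
def SeqCond (η : Fin 6 → ℕ) : Prop :=
  ∃ (n : ℕ) (σ : ZMod n → Fin 3), 1 ≤ n ∧
    η = ∑ᶠ j : ZMod n, kappa (σ j) (σ (j + 1))

/-- Mod2(η): three parity conditions. -/
def Mod2 (η : Fin 6 → ℕ) : Prop :=
  Even (dotNN η ![2,0,0,1,1,0]) ∧ Even (dotNN η ![0,2,0,1,0,1]) ∧
    Even (dotNN η ![0,0,2,0,1,1])

/-- SNec(η). -/
def SNec (η : Fin 6 → ℕ) : Prop :=
  dotNN η ![1,1,1,1,1,1] < 6 ∧ 12 < dotNN η ![6,6,2,6,3,3] ∧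
    dotNN η ![1,1,0,1,1,1] ≠ 0 ∧ SeqCond η ∧ Mod2 η

/-- RNec(ζ). -/
def RNec (ζ : Fin 6 → ℕ) : Prop :=
  dotNN ζ ![1,1,0,1,0,0] < 6 ∧ 12 < dotNN ζ ![6,2,2,3,3,2] ∧
    dotNN ζ ![2,2,0,2,1,1] ≤ 12 ∧ dotNN ζ ![1,0,1,1,1,1] ≠ 0 ∧
    SeqCond ζ ∧ Mod2 ζ ∧
    (0 < dotNN ζ ![2,0,0,1,1,0] → dotNN ζ ![2,2,0,2,1,1] < 12)

/-- The set K ⊆ ℕ^6 × ℕ^6. -/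
def Kset : Set ((Fin 6 → ℕ) × (Fin 6 → ℕ)) :=
  {p | SNec p.1 ∧ RNec p.2 ∧ p.2 2 < 35 ∧
    (dotNN p.1 ![1,0,0,1,1,0] ≠ 0 ∨ dotNN p.2 ![1,0,0,1,1,0] ≠ 0)}


lemma mpair_eq_iff {α : Type*} {a b c d : α} :
    (a ::ₘ {b} : Multiset α) = c ::ₘ {d} ↔ a = c ∧ b = d ∨ a = d ∧ b = c := by
  constructor
  · intro h
    rw [Multiset.cons_eq_cons] at h
    rcases h with ⟨h1, h2⟩ | ⟨h1, cs, h2, h3⟩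
    · exact Or.inl ⟨h1, Multiset.singleton_inj.mp h2⟩
    · rw [Multiset.singleton_eq_cons_iff] at h2 h3
      exact Or.inr ⟨h3.1.symm, h2.1⟩
  · rintro (⟨rfl, rfl⟩ | ⟨rfl, rfl⟩)
    · rfl
    · exact Multiset.pair_comm a b

lemma shift_sum {n : ℕ} [NeZero n] (f : ZMod n → ℕ) : ∑ i, f (i + 1) = ∑ i, f i :=
  Fintype.sum_equiv (Equiv.addRight 1) _ _ (fun _ => rfl)

lemma parity_main {n : ℕ} [NeZero n] (R : ZMod n → ℝ) (T : Fin 6 → Multiset ℝ)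
    (w : Fin 6 → ℕ) (v : ℝ)
    (hpt : ∀ i, (∑ k, (if ({R i, R (i + 1)} : Multiset ℝ) = T k then 1 else 0) * w k)
      = Multiset.count v ({R i, R (i + 1)} : Multiset ℝ)) :
    Even (∑ k, Set.ncard {i : ZMod n | ({R i, R (i + 1)} : Multiset ℝ) = T k} * w k) := by
  classical
  have hc : ∀ k, Set.ncard {i : ZMod n | ({R i, R (i + 1)} : Multiset ℝ) = T k}
      = ∑ i : ZMod n, if ({R i, R (i + 1)} : Multiset ℝ) = T k then 1 else 0 := by
    intro k
    rw [Set.ncard_eq_toFinset_card', Set.toFinset_setOf, Finset.card_filter]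
  have h1 : (∑ k, Set.ncard {i : ZMod n | ({R i, R (i + 1)} : Multiset ℝ) = T k} * w k)
      = ∑ i : ZMod n, Multiset.count v ({R i, R (i + 1)} : Multiset ℝ) := by
    simp_rw [hc, Finset.sum_mul]
    rw [Finset.sum_comm]
    exact Finset.sum_congr rfl fun i _ => hpt i
  have h2 : ∀ i : ZMod n, Multiset.count v ({R i, R (i + 1)} : Multiset ℝ)
      = (if v = R i then 1 else 0) + (if v = R (i + 1) then 1 else 0) := by
    intro i
    rw [Multiset.insert_eq_cons, Multiset.count_cons, Multiset.count_singleton]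
    exact Nat.add_comm _ _
  have h3 : (∑ i : ZMod n, Multiset.count v ({R i, R (i + 1)} : Multiset ℝ))
      = 2 * ∑ i : ZMod n, if v = R i then 1 else 0 := by
    calc (∑ i : ZMod n, Multiset.count v ({R i, R (i + 1)} : Multiset ℝ))
        = ∑ i : ZMod n, ((if v = R i then 1 else 0) + (if v = R (i + 1) then 1 else 0)) :=
        Finset.sum_congr rfl fun i _ => h2 i
      _ = (∑ i : ZMod n, if v = R i then 1 else 0)
          + (∑ i : ZMod n, if v = R (i + 1) then 1 else 0) := Finset.sum_add_distrib
      _ = 2 * ∑ i : ZMod n, if v = R i then 1 else 0 := by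
          rw [shift_sum (fun i => if v = R i then 1 else 0)]; ring
  rw [h1, h3]
  exact even_two_mul _

/-- Parity conditions on angle-counts of all neighbor cycles. -/
theorem stmt_4 (s₀ r₀ : ℝ) (hs₀ : 0 < s₀) (hsr : s₀ < r₀) (hr₀ : r₀ < 1)
    (P : Set Circle2) (hP : IsCompactPacking P) (hrad : radii P = {s₀, r₀, 1})
    (D : Circle2) (hD : D ∈ P) (n : ℕ) (A : ZMod n → Circle2)
    (hcyc : IsNeighborCycle P D A) :
    Even (dotNN (angleCount r₀ s₀ A) ![2,0,0,1,1,0]) ∧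
    Even (dotNN (angleCount r₀ s₀ A) ![0,2,0,1,0,1]) ∧
    Even (dotNN (angleCount r₀ s₀ A) ![0,0,2,0,1,1]) := by
  classical
  obtain ⟨hn, hmem, -, -, -⟩ := hcyc
  haveI : NeZero n := ⟨Nat.one_le_iff_ne_zero.mp hn⟩
  set R : ZMod n → ℝ := fun i => (A i).radius with hR
  have hRmem : ∀ i, R i = s₀ ∨ R i = r₀ ∨ R i = 1 := by
    intro i
    have : R i ∈ radii P := ⟨A i, hmem i, rfl⟩
    rw [hrad] at this
    simpa using this
  have h1 : s₀ ≠ r₀ := hsr.ne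
  have h2 : r₀ ≠ s₀ := hsr.ne'
  have h3 : r₀ ≠ 1 := hr₀.ne
  have h4 : (1 : ℝ) ≠ r₀ := hr₀.ne'
  have h5 : s₀ ≠ 1 := (hsr.trans hr₀).ne
  have h6 : (1 : ℝ) ≠ s₀ := (hsr.trans hr₀).ne'
  have key : ∀ (w : Fin 6 → ℕ) (v : ℝ),
      (∀ i, (∑ k, (if ({R i, R (i + 1)} : Multiset ℝ) = pairTargets r₀ s₀ k then 1 else 0) * w k)
        = Multiset.count v ({R i, R (i + 1)} : Multiset ℝ)) →
      Even (dotNN (angleCount r₀ s₀ A) w) := by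
    intro w v hpt
    have : dotNN (angleCount r₀ s₀ A) w
        = ∑ k, Set.ncard {i : ZMod n | ({R i, R (i + 1)} : Multiset ℝ) = pairTargets r₀ s₀ k}
            * w k := rfl
    rw [this]
    exact parity_main R (pairTargets r₀ s₀) w v hpt
  have pt0 : pairTargets r₀ s₀ 0 = {1, 1} := rfl
  have pt1 : pairTargets r₀ s₀ 1 = {r₀, r₀} := rfl
  have pt2 : pairTargets r₀ s₀ 2 = {s₀, s₀} := rfl
  have pt3 : pairTargets r₀ s₀ 3 = {1, r₀} := rfl
  have pt4 : pairTargets r₀ s₀ 4 = {1, s₀} := rfl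
  have pt5 : pairTargets r₀ s₀ 5 = {r₀, s₀} := rfl
  refine ⟨key _ 1 ?_, key _ r₀ ?_, key _ s₀ ?_⟩ <;>
    intro i <;>
    rcases hRmem i with h | h | h <;> rcases hRmem (i + 1) with h' | h' | h' <;>
      rw [h, h'] <;>
      simp only [Fin.sum_univ_six, pt0, pt1, pt2, pt3, pt4, pt5, Multiset.insert_eq_cons,
        mpair_eq_iff, Multiset.count_cons, Multiset.count_singleton] <;>
      simp [h1, h2, h3, h4, h5, h6] <;> rfl


end
end

section
/- For all real numbers r, s with 0 < s < r < 1: ang(s;s,s) = π/3; each of ang(s;1,1), ang(s;r,r), ang(s;1,r), ang(s;1,s), ang(s;r,s) is strictly greater than π/3; each of ang(s;1,1), ang(s;r,r), ang(s;1,r) is strictly less than π; and each of ang(s;1,s), ang(s;r,s) is strictly less than π/2. -/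
open scoped BigOperators

noncomputable section

private lemma arccos_half : Real.arccos (1/2) = Real.pi / 3 := by
  rw [← Real.cos_pi_div_three]
  exact Real.arccos_cos (by positivity) (by linarith [Real.pi_pos])

private lemma arccos_lt_pi' {x : ℝ} (h : -1 < x) : Real.arccos x < Real.pi := by
  refine lt_of_le_of_ne (Real.arccos_le_pi x) fun he => ?_
  have := Real.arccos_eq_pi.mp he; linarith

private lemma pi3_lt_arccos {x : ℝ} (h1 : -1 < x) (h2 : x < 1/2) :
    Real.pi / 3 < Real.arccos x := by
  rw [← arccos_half]
  exact Real.strictAntiOn_arccos ⟨h1.le, by linarith⟩ (by norm_num) h2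

private lemma ang_bounds (a b c : ℝ) (ha : 0 < a) (hb : 0 < b) (hc : 0 < c)
    (h : a^2 + a*b + a*c < 3*(b*c)) :
    Real.pi / 3 < ang a b c ∧ ang a b c < Real.pi := by
  have hD : 0 < 2 * (a + c) * (a + b) := by positivity
  have h1 : -1 < ((a + b) ^ 2 + (a + c) ^ 2 - (b + c) ^ 2) / (2 * (a + c) * (a + b)) := by
    rw [lt_div_iff₀ hD]; nlinarith
  have h2 : ((a + b) ^ 2 + (a + c) ^ 2 - (b + c) ^ 2) / (2 * (a + c) * (a + b)) < 1/2 := by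
    rw [div_lt_iff₀ hD]; nlinarith
  exact ⟨pi3_lt_arccos h1 h2, arccos_lt_pi' h1⟩

private lemma ang_lt_pi2 (a b c : ℝ) (ha : 0 < a) (hb : 0 < b) (hc : 0 < c)
    (h : b*c < a^2 + a*b + a*c) : ang a b c < Real.pi / 2 := by
  have hD : 0 < 2 * (a + c) * (a + b) := by positivity
  refine Real.arccos_lt_pi_div_two.mpr ?_
  rw [lt_div_iff₀ hD]; nlinarith

/-- Bounds on the angles α(r,s) for 0 < s < r < 1. -/
theorem stmt_9 (r s : ℝ) (hs : 0 < s) (hsr : s < r) (hr : r < 1) :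
    ang s s s = Real.pi / 3 ∧
    Real.pi / 3 < ang s 1 1 ∧ Real.pi / 3 < ang s r r ∧
    Real.pi / 3 < ang s 1 r ∧ Real.pi / 3 < ang s 1 s ∧
    Real.pi / 3 < ang s r s ∧
    ang s 1 1 < Real.pi ∧ ang s r r < Real.pi ∧ ang s 1 r < Real.pi ∧
    ang s 1 s < Real.pi / 2 ∧ ang s r s < Real.pi / 2 := by
  have hs2 : s < 1 := by linarith
  refine ⟨?_, ?_, ?_, ?_, ?_, ?_, ?_, ?_, ?_, ?_, ?_⟩
  · have : ((s + s) ^ 2 + (s + s) ^ 2 - (s + s) ^ 2) / (2 * (s + s) * (s + s)) = 1/2 := by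
      field_simp; ring
    rw [ang, this, arccos_half]
  · exact (ang_bounds s 1 1 hs one_pos one_pos (by nlinarith)).1
  · exact (ang_bounds s r r hs (by linarith) (by linarith) (by nlinarith)).1
  · exact (ang_bounds s 1 r hs one_pos (by linarith) (by nlinarith)).1
  · exact (ang_bounds s 1 s hs one_pos hs (by nlinarith)).1
  · exact (ang_bounds s r s hs (by linarith) hs (by nlinarith)).1
  · exact (ang_bounds s 1 1 hs one_pos one_pos (by nlinarith)).2
  · exact (ang_bounds s r r hs (by linarith) (by linarith) (by nlinarith)).2
  · exact (ang_bounds s 1 r hs one_pos (by linarith) (by nlinarith)).2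
  · exact ang_lt_pi2 s 1 s hs one_pos hs (by nlinarith)
  · exact ang_lt_pi2 s r s hs (by linarith) hs (by nlinarith)

end
end

section
/- For all real numbers r, s with 0 < s < r < 1: ang(r;r,r) = π/3; ang(r;1,1) > π/3 and ang(r;1,r) > π/3; each of ang(r;s,s), ang(r;1,s), ang(r;r,s) is strictly positive; ang(r;1,1) < π; ang(r;s,s) < π/3; ang(r;1,r) < π/2; ang(r;1,s) < π/2; and ang(r;r,s) < π/3. -/
open scoped BigOperators

noncomputable section

/-- Bounds on the angles β(r,s) for 0 < s < r < 1. -/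
theorem stmt_10 (r s : ℝ) (hs : 0 < s) (hsr : s < r) (hr : r < 1) :
    ang r r r = Real.pi / 3 ∧
    Real.pi / 3 < ang r 1 1 ∧ Real.pi / 3 < ang r 1 r ∧
    0 < ang r s s ∧ 0 < ang r 1 s ∧ 0 < ang r r s ∧
    ang r 1 1 < Real.pi ∧ ang r s s < Real.pi / 3 ∧
    ang r 1 r < Real.pi / 2 ∧ ang r 1 s < Real.pi / 2 ∧
    ang r r s < Real.pi / 3 := by
  have hr0 : 0 < r := hs.trans hsr
  have pipos := Real.pi_pos
  have harccos_half : Real.arccos (1/2) = Real.pi/3 :=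
    Real.arccos_eq_of_eq_cos (by positivity) (by linarith) (by rw [Real.cos_pi_div_three])
  have key_gt : ∀ x : ℝ, -1 ≤ x → x < 1/2 → Real.pi/3 < Real.arccos x := by
    intro x h1 h2
    rw [← harccos_half]
    exact Real.strictAntiOn_arccos ⟨h1, by linarith⟩ ⟨by norm_num, by norm_num⟩ h2
  have key_lt : ∀ x : ℝ, 1/2 < x → x ≤ 1 → Real.arccos x < Real.pi/3 := by
    intro x h1 h2
    rw [← harccos_half]
    exact Real.strictAntiOn_arccos ⟨by norm_num, by norm_num⟩ ⟨by linarith, h2⟩ h1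
  refine ⟨?_, ?_, ?_, ?_, ?_, ?_, ?_, ?_, ?_, ?_, ?_⟩
  · unfold ang
    have h : ((r+r)^2 + (r+r)^2 - (r+r)^2)/(2*(r+r)*(r+r)) = 1/2 := by
      rw [div_eq_iff (by positivity)]; ring
    rw [h, harccos_half]
  · unfold ang
    apply key_gt
    · rw [le_div_iff₀ (by positivity)]; nlinarith
    · rw [div_lt_iff₀ (by positivity)]; nlinarith
  · unfold ang
    apply key_gt
    · rw [le_div_iff₀ (by positivity)]; nlinarith
    · rw [div_lt_iff₀ (by positivity)]; nlinarith
  · unfold ang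
    rw [Real.arccos_pos, div_lt_one (by positivity)]; nlinarith
  · unfold ang
    rw [Real.arccos_pos, div_lt_one (by positivity)]; nlinarith
  · unfold ang
    rw [Real.arccos_pos, div_lt_one (by positivity)]; nlinarith
  · unfold ang
    refine lt_of_le_of_ne (Real.arccos_le_pi _) ?_
    rw [Ne, Real.arccos_eq_pi, not_le, lt_div_iff₀ (by positivity)]
    nlinarith
  · unfold ang
    apply key_lt
    · rw [lt_div_iff₀ (by positivity)]; nlinarith
    · rw [div_le_one (by positivity)]; nlinarith
  · unfold ang
    rw [Real.arccos_lt_pi_div_two]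
    apply div_pos _ (by positivity)
    nlinarith
  · unfold ang
    rw [Real.arccos_lt_pi_div_two]
    apply div_pos _ (by positivity)
    nlinarith
  · unfold ang
    apply key_lt
    · rw [lt_div_iff₀ (by positivity)]; nlinarith
    · rw [div_le_one (by positivity)]; nlinarith

end
end

section
/- Let η ∈ ℕ^6 satisfy SNec(η) and let m ∈ (0,1). Then the function g : (0,1) → ℝ defined by g(r) := η·α(r, m·r) is monotone decreasing (antitone) on (0,1); if moreover η·(1,0,0,1,1,0) ≠ 0 then g is strictly decreasing on (0,1); and if η·(1,0,0,1,1,0) = 0 then g is constant on (0,1). -/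
open scoped BigOperators

noncomputable section

/-!
By the law of cosines, `cos (ang a b c) = 1 - 2 / ((1 + a / b) * (1 + a / c))`, so the angle
depends only on the ratios `a / b`, `a / c` and strictly decreases in each. For `s = m r` the six
ratio pairs of `α(r, m r)` are `(mr, mr), (m, m), (1, 1), (mr, m), (mr, 1), (m, 1)`: the first,
fourth and fifth coordinates strictly decrease in `r` and the others are constant. Weighting by
`η ≥ 0` gives the three claims, the decreasing part being weighted by `η·(1,0,0,1,1,0)`.
-/

open Real

def angRatio (x y : ℝ) : ℝ := arccos (1 - 2 / ((1 + x) * (1 + y)))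

lemma ang_eq_angRatio {a b c : ℝ} (ha : 0 < a) (hb : 0 < b) (hc : 0 < c) :
    ang a b c = angRatio (a / b) (a / c) := by
  unfold ang angRatio
  congr 1
  field_simp
  ring

lemma arccos_one_sub_two_div_lt {t₁ t₂ : ℝ} (h₁ : 1 ≤ t₁) (h : t₁ < t₂) :
    arccos (1 - 2 / t₂) < arccos (1 - 2 / t₁) := by
  have ht₁ : 0 < t₁ := by linarith
  have hle : 2 / t₁ ≤ 2 := by rw [div_le_iff₀ ht₁]; linarith
  have hlt : 2 / t₂ < 2 / t₁ := div_lt_div_of_pos_left two_pos ht₁ h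
  have hpos : 0 < 2 / t₂ := div_pos two_pos (ht₁.trans h)
  exact arccos_lt_arccos (by linarith) (by linarith) (by linarith)

lemma angRatio_lt_angRatio {x₁ x₂ y₁ y₂ : ℝ} (hx₁ : 0 ≤ x₁) (hy₁ : 0 ≤ y₁) (hx : x₁ < x₂)
    (hy : y₁ ≤ y₂) : angRatio x₂ y₂ < angRatio x₁ y₁ :=
  arccos_one_sub_two_div_lt (by nlinarith) (by nlinarith)

lemma alphaVec_mul {m r : ℝ} (hm : 0 < m) (hr : 0 < r) :
    alphaVec r (m * r) = ![angRatio (m * r) (m * r), angRatio m m, angRatio 1 1,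
      angRatio (m * r) m, angRatio (m * r) 1, angRatio m 1] := by
  have hmr : 0 < m * r := mul_pos hm hr
  have hdiv : m * r / r = m := by field_simp
  simp only [alphaVec, ang_eq_angRatio hmr one_pos one_pos, ang_eq_angRatio hmr hr hr,
    ang_eq_angRatio hmr hmr hmr, ang_eq_angRatio hmr one_pos hr, ang_eq_angRatio hmr one_pos hmr,
    ang_eq_angRatio hmr hr hmr, div_one, div_self hmr.ne', hdiv]

section AlongRay

variable {m : ℝ}

lemma alphaVec_mul_apply_strictAntiOn (hm : 0 < m) {i : Fin 6} (hi : i = 0 ∨ i = 3 ∨ i = 4) :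
    StrictAntiOn (fun r => alphaVec r (m * r) i) (Set.Ioi 0) := by
  intro r₁ hr₁ r₂ hr₂ h
  have hmr₁ : 0 < m * r₁ := mul_pos hm hr₁
  have hmr : m * r₁ < m * r₂ := mul_lt_mul_of_pos_left h hm
  simp only [alphaVec_mul hm hr₁, alphaVec_mul hm hr₂]
  rcases hi with rfl | rfl | rfl
  · exact angRatio_lt_angRatio hmr₁.le hmr₁.le hmr hmr.le
  · exact angRatio_lt_angRatio hmr₁.le hm.le hmr le_rfl
  · exact angRatio_lt_angRatio hmr₁.le zero_le_one hmr le_rfl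

lemma alphaVec_mul_apply_eq (hm : 0 < m) {i : Fin 6} (hi : i = 1 ∨ i = 2 ∨ i = 5) {r₁ r₂ : ℝ}
    (hr₁ : 0 < r₁) (hr₂ : 0 < r₂) : alphaVec r₁ (m * r₁) i = alphaVec r₂ (m * r₂) i := by
  rw [alphaVec_mul hm hr₁, alphaVec_mul hm hr₂]
  rcases hi with rfl | rfl | rfl <;> rfl

lemma alphaVec_mul_apply_antitoneOn (hm : 0 < m) (i : Fin 6) :
    AntitoneOn (fun r => alphaVec r (m * r) i) (Set.Ioi 0) := by
  intro r₁ hr₁ r₂ hr₂ h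
  fin_cases i
  · exact (alphaVec_mul_apply_strictAntiOn hm (by decide)).antitoneOn hr₁ hr₂ h
  · exact (alphaVec_mul_apply_eq hm (by decide) hr₁ hr₂).symm.le
  · exact (alphaVec_mul_apply_eq hm (by decide) hr₁ hr₂).symm.le
  · exact (alphaVec_mul_apply_strictAntiOn hm (by decide)).antitoneOn hr₁ hr₂ h
  · exact (alphaVec_mul_apply_strictAntiOn hm (by decide)).antitoneOn hr₁ hr₂ h
  · exact (alphaVec_mul_apply_eq hm (by decide) hr₁ hr₂).symm.le

end AlongRay

section WeightedSum

variable {α : Type*} [Preorder α] {s : Set α} {f : α → Fin 6 → ℝ}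

lemma dotNR_antitoneOn (η : Fin 6 → ℕ) (hf : ∀ i, AntitoneOn (fun a => f a i) s) :
    AntitoneOn (fun a => dotNR η (f a)) s := fun _ ha _ hb hab =>
  Finset.sum_le_sum fun i _ => mul_le_mul_of_nonneg_left (hf i ha hb hab) (Nat.cast_nonneg _)

lemma dotNR_strictAntiOn {η : Fin 6 → ℕ} (hf : ∀ i, AntitoneOn (fun a => f a i) s)
    (hstrict : ∃ i, η i ≠ 0 ∧ StrictAntiOn (fun a => f a i) s) :
    StrictAntiOn (fun a => dotNR η (f a)) s := by
  intro a ha b hb hab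
  obtain ⟨i, hηi, hi⟩ := hstrict
  refine Finset.sum_lt_sum (fun j _ => ?_) ⟨i, Finset.mem_univ i, ?_⟩
  · exact mul_le_mul_of_nonneg_left (hf j ha hb hab.le) (Nat.cast_nonneg _)
  · exact mul_lt_mul_of_pos_left (hi ha hb hab) (by positivity)

lemma dotNR_eq_of_apply_eq {η : Fin 6 → ℕ} {v w : Fin 6 → ℝ} (h : ∀ i, η i ≠ 0 → v i = w i) :
    dotNR η v = dotNR η w := by
  refine Finset.sum_congr rfl fun i _ => ?_
  by_cases hi : η i = 0
  · simp [hi]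
  · rw [h i hi]

end WeightedSum

lemma dotNN_eq_add (η : Fin 6 → ℕ) : dotNN η ![1,0,0,1,1,0] = η 0 + η 3 + η 4 := by
  simp [dotNN, Fin.sum_univ_six]

theorem stmt_12_general (η : Fin 6 → ℕ) (m : ℝ) (hm : m ∈ Set.Ioo (0:ℝ) 1) :
    AntitoneOn (fun r => dotNR η (alphaVec r (m * r))) (Set.Ioo 0 1) ∧
    (dotNN η ![1,0,0,1,1,0] ≠ 0 →
      StrictAntiOn (fun r => dotNR η (alphaVec r (m * r))) (Set.Ioo 0 1)) ∧
    (dotNN η ![1,0,0,1,1,0] = 0 →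
      ∀ r₁ ∈ Set.Ioo (0:ℝ) 1, ∀ r₂ ∈ Set.Ioo (0:ℝ) 1,
        dotNR η (alphaVec r₁ (m * r₁)) = dotNR η (alphaVec r₂ (m * r₂))) := by
  have hm₀ : 0 < m := hm.1
  have hsub : Set.Ioo (0:ℝ) 1 ⊆ Set.Ioi 0 := Set.Ioo_subset_Ioi_self
  have hanti := alphaVec_mul_apply_antitoneOn hm₀
  rw [dotNN_eq_add]
  refine ⟨(dotNR_antitoneOn η hanti).mono hsub, fun hne => ?_, fun h0 r₁ hr₁ r₂ hr₂ => ?_⟩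
  · obtain ⟨i, hi, hηi⟩ : ∃ i : Fin 6, (i = 0 ∨ i = 3 ∨ i = 4) ∧ η i ≠ 0 := by
      by_cases h₀ : η 0 = 0
      · by_cases h₃ : η 3 = 0
        · exact ⟨4, by decide, by omega⟩
        · exact ⟨3, by decide, h₃⟩
      · exact ⟨0, by decide, h₀⟩
    exact (dotNR_strictAntiOn hanti ⟨i, hηi, alphaVec_mul_apply_strictAntiOn hm₀ hi⟩).mono hsub
  · refine dotNR_eq_of_apply_eq fun i hηi => alphaVec_mul_apply_eq hm₀ ?_ hr₁.1 hr₂.1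
    fin_cases i <;> simp_all

/-- Monotonicity of r ↦ η·α(r, m·r) on (0,1). -/
theorem stmt_12 (η : Fin 6 → ℕ) (hη : SNec η) (m : ℝ) (hm : m ∈ Set.Ioo (0:ℝ) 1) :
    AntitoneOn (fun r => dotNR η (alphaVec r (m * r))) (Set.Ioo 0 1) ∧
    (dotNN η ![1,0,0,1,1,0] ≠ 0 →
      StrictAntiOn (fun r => dotNR η (alphaVec r (m * r))) (Set.Ioo 0 1)) ∧
    (dotNN η ![1,0,0,1,1,0] = 0 →
      ∀ r₁ ∈ Set.Ioo (0:ℝ) 1, ∀ r₂ ∈ Set.Ioo (0:ℝ) 1,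
        dotNR η (alphaVec r₁ (m * r₁)) = dotNR η (alphaVec r₂ (m * r₂))) :=
  stmt_12_general η m hm

end
end

section
/- Let η ∈ ℕ^6 satisfy SNec(η). Then for every (r,s) ∈ Δ₃, the derivative at the point s of the function t ↦ η·α(r,t) is strictly negative. -/
open scoped BigOperators

noncomputable section

/-!
By the law of cosines, `ang t b c = arccos (1 - 2bc/((t+b)(t+c)))`, and the argument of `arccos`
increases with `t`, also when `c = t` (it is then `t/(t+b)`). So every coordinate of `α(r,·)` has
negative derivative except `ang t t t = arccos (1/2)`, and `SNec η` gives weight to one of the others.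
-/

open Filter Real

lemma ang_eq_arccos {a b c : ℝ} (hab : a + b ≠ 0) (hac : a + c ≠ 0) :
    ang a b c = arccos (1 - 2 * b * c / ((a + b) * (a + c))) := by
  unfold ang
  congr 1
  field_simp
  ring

lemma ang_self_self {a : ℝ} (ha : a ≠ 0) : ang a a a = arccos (1 / 2) := by
  unfold ang
  congr 1
  field_simp
  ring

lemma one_sub_two_mul_div_mem_Ioo {a b c : ℝ} (ha : 0 < a) (hb : 0 < b) (hc : 0 < c) :
    1 - 2 * b * c / ((a + b) * (a + c)) ∈ Set.Ioo (-1) 1 := by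
  have hq : 2 * b * c / ((a + b) * (a + c)) < 2 := by
    rw [div_lt_iff₀ (by positivity)]
    nlinarith [mul_pos ha hb, mul_pos ha hc, mul_pos ha ha]
  constructor
  · linarith
  · have : 0 < 2 * b * c / ((a + b) * (a + c)) := by positivity
    linarith

lemma HasDerivAt.exists_neg_of_eventuallyEq_arccos {f g : ℝ → ℝ} {s d : ℝ}
    (hfg : f =ᶠ[nhds s] fun t => arccos (g t)) (hg : HasDerivAt g d s) (hd : 0 < d)
    (hgs : g s ∈ Set.Ioo (-1) 1) :
    ∃ d' < 0, HasDerivAt f d' s := by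
  obtain ⟨h₁, h₂⟩ := hgs
  refine ⟨-(1 / √(1 - g s ^ 2)) * d, ?_, ?_⟩
  · have : 0 < √(1 - g s ^ 2) := sqrt_pos.2 (by nlinarith)
    have : 0 < 1 / √(1 - g s ^ 2) := by positivity
    nlinarith
  · exact ((hasDerivAt_arccos h₁.ne' h₂.ne).comp s hg).congr_of_eventuallyEq hfg

lemma exists_hasDerivAt_ang_neg {b c s : ℝ} (hb : 0 < b) (hc : 0 < c) (hs : 0 < s) :
    ∃ d < 0, HasDerivAt (fun t => ang t b c) d s := by
  have hfg : (fun t => ang t b c) =ᶠ[nhds s]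
      fun t => arccos (1 - 2 * b * c / ((t + b) * (t + c))) := by
    filter_upwards [Ioi_mem_nhds hs] with t (ht : 0 < t)
    exact ang_eq_arccos (by positivity) (by positivity)
  have hden : (s + b) * (s + c) ≠ 0 := by positivity
  have hder : HasDerivAt (fun t => 1 - 2 * b * c / ((t + b) * (t + c)))
      (2 * b * c * ((s + c) + (s + b)) / ((s + b) * (s + c)) ^ 2) s := by
    have hprod : HasDerivAt (fun t => (t + b) * (t + c)) (1 * (s + c) + (s + b) * 1) s :=
      ((hasDerivAt_id s).add_const b).mul ((hasDerivAt_id s).add_const c)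
    refine (((hasDerivAt_const s (2 * b * c)).div hprod hden).const_sub 1).congr_deriv ?_
    ring
  exact hder.exists_neg_of_eventuallyEq_arccos hfg (by positivity)
    (one_sub_two_mul_div_mem_Ioo hs hb hc)

lemma exists_hasDerivAt_ang_self_neg {b s : ℝ} (hb : 0 < b) (hs : 0 < s) :
    ∃ d < 0, HasDerivAt (fun t => ang t b t) d s := by
  have hfg : (fun t => ang t b t) =ᶠ[nhds s] fun t => arccos (t / (t + b)) := by
    filter_upwards [Ioi_mem_nhds hs] with t (ht : 0 < t)
    rw [ang_eq_arccos (by positivity) (by positivity)]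
    congr 1
    field_simp
    ring
  have hder : HasDerivAt (fun t => t / (t + b)) ((1 * (s + b) - s * 1) / (s + b) ^ 2) s :=
    (hasDerivAt_id s).div ((hasDerivAt_id s).add_const b) (by positivity)
  refine hder.exists_neg_of_eventuallyEq_arccos hfg ?_ ⟨?_, ?_⟩
  · rw [show 1 * (s + b) - s * 1 = b by ring]
    positivity
  · have : 0 < s / (s + b) := by positivity
    linarith
  · rw [div_lt_one (by positivity)]
    linarith

lemma hasDerivAt_ang_self_self {s : ℝ} (hs : 0 < s) :
    HasDerivAt (fun t => ang t t t) 0 s := by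
  have hfg : (fun t => ang t t t) =ᶠ[nhds s] fun _ => arccos (1 / 2) := by
    filter_upwards [Ioi_mem_nhds hs] with t (ht : 0 < t)
    exact ang_self_self ht.ne'
  exact (hasDerivAt_const s _).congr_of_eventuallyEq hfg

lemma exists_ne_zero_of_dotNN_ne_zero {ξ v : Fin 6 → ℕ} (h : dotNN ξ v ≠ 0) :
    ∃ i, ξ i ≠ 0 ∧ v i ≠ 0 := by
  obtain ⟨i, -, hi⟩ := Finset.exists_ne_zero_of_sum_ne_zero h
  exact ⟨i, left_ne_zero_of_mul hi, right_ne_zero_of_mul hi⟩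

lemma hasDerivAt_dotNR {ξ : Fin 6 → ℕ} {v : ℝ → Fin 6 → ℝ} {d : Fin 6 → ℝ} {s : ℝ}
    (hv : ∀ i, HasDerivAt (fun t => v t i) (d i) s) :
    HasDerivAt (fun t => dotNR ξ (v t)) (dotNR ξ d) s := by
  unfold dotNR
  exact HasDerivAt.fun_sum fun i _ => (hv i).const_mul _

lemma dotNR_neg {ξ : Fin 6 → ℕ} {d : Fin 6 → ℝ} (hd : ∀ i, d i ≤ 0)
    (hlt : ∃ i, ξ i ≠ 0 ∧ d i < 0) : dotNR ξ d < 0 := by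
  obtain ⟨j, hξj, hdj⟩ := hlt
  refine Finset.sum_neg' (fun i _ => mul_nonpos_of_nonneg_of_nonpos (Nat.cast_nonneg _) (hd i))
    ⟨j, Finset.mem_univ j, mul_neg_of_pos_of_neg (by positivity) hdj⟩

/-- The partial derivative of η·α(r,·) is strictly negative on Δ₃. -/
theorem stmt_13 (η : Fin 6 → ℕ) (hη : SNec η) (r s : ℝ) (h : (r, s) ∈ Delta3) :
    ∃ d : ℝ, d < 0 ∧ HasDerivAt (fun t => dotNR η (alphaVec r t)) d s := by
  obtain ⟨hs, hsr, -⟩ := h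
  have hr : 0 < r := hs.trans hsr
  obtain ⟨d₀, hd₀, h₀⟩ := exists_hasDerivAt_ang_neg one_pos one_pos hs
  obtain ⟨d₁, hd₁, h₁⟩ := exists_hasDerivAt_ang_neg hr hr hs
  obtain ⟨d₃, hd₃, h₃⟩ := exists_hasDerivAt_ang_neg one_pos hr hs
  obtain ⟨d₄, hd₄, h₄⟩ := exists_hasDerivAt_ang_self_neg one_pos hs
  obtain ⟨d₅, hd₅, h₅⟩ := exists_hasDerivAt_ang_self_neg hr hs
  set d : Fin 6 → ℝ := ![d₀, d₁, 0, d₃, d₄, d₅]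
  have hder : ∀ i, HasDerivAt (fun t => alphaVec r t i) (d i) s := by
    intro i
    fin_cases i
    exacts [h₀, h₁, hasDerivAt_ang_self_self hs, h₃, h₄, h₅]
  refine ⟨dotNR η d, dotNR_neg ?_ ?_, hasDerivAt_dotNR hder⟩
  · intro i
    fin_cases i <;> simp [d] <;> linarith
  · obtain ⟨i, hηi, hi⟩ := exists_ne_zero_of_dotNN_ne_zero hη.2.2.1
    refine ⟨i, hηi, ?_⟩
    fin_cases i <;> simp_all [d]
end
end

section
/- Let η ∈ ℕ^6 satisfy SNec(η). Then η·α(r,s) > 2π for every (r,s) ∈ Δ₃ with s ≤ r/10. -/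
open scoped BigOperators

noncomputable section

/-! ### Auxiliary lemmas for `stmt_15` -/

private lemma vec6_five' {α : Type*} (a b c d e f : α) : ![a,b,c,d,e,f] 5 = f := rfl

private lemma arccos_anti' {x y : ℝ} (h : x ≤ y) : Real.arccos y ≤ Real.arccos x := by
  unfold Real.arccos; have := Real.monotone_arcsin h; linarith

private lemma ang_ge_big' {s b c : ℝ} (hs : 0 < s) (hb : 10*s ≤ b) (hc : 10*s ≤ c) :
    Real.pi - Real.arccos (79/121) ≤ ang s b c := by
  have hbp : 0 < b := by linarith
  have hcp : 0 < c := by linarith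
  have hden : 0 < 2 * (s + c) * (s + b) := by positivity
  have hq1 : ((s + b) ^ 2 + (s + c) ^ 2 - (b + c) ^ 2) / (2 * (s + c) * (s + b)) ≤ -(79/121) := by
    rw [div_le_iff₀ hden]
    nlinarith [mul_nonneg (by linarith : (0:ℝ) ≤ b - 10*s) (by linarith : (0:ℝ) ≤ c - 10*s),
      mul_nonneg hs.le (by linarith : (0:ℝ) ≤ b + c - 20*s)]
  have h2 := arccos_anti' hq1
  rw [Real.arccos_neg] at h2
  exact h2

private lemma ang_ge_small' {s b : ℝ} (hs : 0 < s) (hb : 10*s ≤ b) :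
    Real.pi/2 - Real.arcsin (1/11) ≤ ang s b s := by
  have hbp : 0 < b := by linarith
  have hden : 0 < 2 * (s + s) * (s + b) := by positivity
  have hq1 : ((s + b) ^ 2 + (s + s) ^ 2 - (b + s) ^ 2) / (2 * (s + s) * (s + b)) ≤ 1/11 := by
    rw [div_le_iff₀ hden]
    nlinarith [mul_nonneg hs.le (by linarith : (0:ℝ) ≤ b - 10*s)]
  have h2 := arccos_anti' hq1
  rw [Real.arccos_eq_pi_div_two_sub_arcsin] at h2
  exact h2

private lemma ang_sss' {s : ℝ} (hs : 0 < s) : ang s s s = Real.pi/3 := by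
  unfold ang
  have : ((s + s) ^ 2 + (s + s) ^ 2 - (s + s) ^ 2) / (2 * (s + s) * (s + s)) = 1/2 := by
    field_simp; ring
  rw [this, show (1/2 : ℝ) = Real.cos (Real.pi/3) by rw [Real.cos_pi_div_three]]
  exact Real.arccos_cos (by positivity) (by linarith [Real.pi_pos])

private lemma arcsin_small' : Real.arcsin (1/11) ≤ Real.pi/22 := by
  have h1 : 2/Real.pi * Real.arcsin (1/11) ≤ Real.sin (Real.arcsin (1/11)) :=
    Real.mul_le_sin (Real.arcsin_nonneg.2 (by norm_num)) (Real.arcsin_le_pi_div_two _)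
  rw [Real.sin_arcsin (by norm_num) (by norm_num), div_mul_eq_mul_div,
    div_le_iff₀ Real.pi_pos] at h1
  linarith

private lemma crit' : Real.arccos (79/121) + 2 * Real.arcsin (1/11) < Real.pi / 3 := by
  have hpi := Real.pi_pos
  set a := Real.arccos (79/121) with ha
  set b := Real.arcsin (1/11) with hb
  have hsb : Real.sin b = 1/11 := Real.sin_arcsin (by norm_num) (by norm_num)
  have hcb : Real.cos b = Real.sqrt (1 - (1/11)^2) := Real.cos_arcsin _
  have hca : Real.cos a = 79/121 := Real.cos_arccos (by norm_num) (by norm_num)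
  have hsa : Real.sin a = Real.sqrt (1 - (79/121)^2) := Real.sin_arccos _
  have ha0 : 0 ≤ a := Real.arccos_nonneg _
  have ha2 : a ≤ Real.pi/2 := Real.arccos_le_pi_div_two.2 (by norm_num)
  have hb0 : 0 ≤ b := Real.arcsin_nonneg.2 (by norm_num)
  have hb2 : b ≤ Real.pi/22 := arcsin_small'
  by_contra hcon
  push_neg at hcon
  have hmem1 : Real.pi/3 ∈ Set.Icc (0:ℝ) Real.pi := ⟨by positivity, by linarith⟩
  have hmem2 : a + 2*b ∈ Set.Icc (0:ℝ) Real.pi := ⟨by linarith, by linarith⟩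
  have hle : Real.cos (a + 2*b) ≤ Real.cos (Real.pi/3) :=
    Real.strictAntiOn_cos.antitoneOn hmem1 hmem2 hcon
  rw [Real.cos_pi_div_three, Real.cos_add, Real.cos_two_mul, Real.sin_two_mul,
    hca, hsa, hcb, hsb] at hle
  set s1 := Real.sqrt (1 - (79/121)^2) with hs1
  set s2 := Real.sqrt (1 - (1/11)^2) with hs2
  have hs1sq : s1^2 = 1 - (79/121)^2 := Real.sq_sqrt (by norm_num)
  have hs2sq : s2^2 = 1 - (1/11)^2 := Real.sq_sqrt (by norm_num)
  have hs1n : 0 ≤ s1 := Real.sqrt_nonneg _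
  have hs2n : 0 ≤ s2 := Real.sqrt_nonneg _
  nlinarith [sq_nonneg (s1*s2 - 45771/58564), mul_nonneg hs1n hs2n]

private lemma cases_lemma' (a b : ℝ) (ha0 : 0 ≤ a) (hb0 : 0 ≤ b)
    (ha2 : a ≤ Real.pi/2) (hb2 : b ≤ Real.pi/22) (hcrit : a + 2*b < Real.pi/3)
    (x y z : ℕ) (h1 : x + y + z ≤ 5) (h2 : 13 ≤ 6*x + 2*y + 3*z)
    (hze : z % 2 = 0) (h3 : 0 < x → 0 < y → 0 < z) :
    2*Real.pi < x*(Real.pi - a) + y*(Real.pi/3) + z*(Real.pi/2 - b) := by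
  have hpi := Real.pi_gt_three
  have hx5 : x ≤ 5 := by omega
  have hy5 : y ≤ 5 := by omega
  have hz5 : z ≤ 5 := by omega
  interval_cases x <;> interval_cases y <;> interval_cases z <;>
    first
      | omega
      | (push_cast; linarith)

private lemma seq_conn' {η : Fin 6 → ℕ} (hseq : SeqCond η)
    (hx : 0 < η 0 + η 1 + η 3) (hy : 0 < η 2) : 0 < η 4 + η 5 := by
  obtain ⟨n, σ, hn, hsum⟩ := hseq
  haveI : NeZero n := ⟨by omega⟩
  have hfin : ∀ i, η i = ∑ j : ZMod n, kappa (σ j) (σ (j+1)) i := by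
    intro i
    rw [hsum, finsum_eq_sum_of_fintype]
    simp [Finset.sum_apply]
  have h2 : ∃ j : ZMod n, σ j = 2 := by
    rw [hfin 2] at hy
    obtain ⟨j, -, hj⟩ := Finset.exists_ne_zero_of_sum_ne_zero hy.ne'
    exact ⟨j, (by decide : ∀ u v : Fin 3, kappa u v 2 ≠ 0 → u = 2) _ _ hj⟩
  have hxw : ∃ j : ZMod n, σ j ≠ 2 := by
    have : 0 < ∑ j : ZMod n, (kappa (σ j) (σ (j+1)) 0 + kappa (σ j) (σ (j+1)) 1
        + kappa (σ j) (σ (j+1)) 3) := by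
      rw [Finset.sum_add_distrib, Finset.sum_add_distrib, ← hfin 0, ← hfin 1, ← hfin 3]
      omega
    obtain ⟨j, -, hj⟩ := Finset.exists_ne_zero_of_sum_ne_zero this.ne'
    exact ⟨j, ((by decide : ∀ u v : Fin 3,
      kappa u v 0 + kappa u v 1 + kappa u v 3 ≠ 0 → u ≠ 2 ∧ v ≠ 2) _ _ hj).1⟩
  obtain ⟨j1, hj1⟩ := h2
  obtain ⟨j2, hj2⟩ := hxw
  have hmix : ∃ j : ZMod n, σ j = 2 ∧ σ (j+1) ≠ 2 := by
    by_contra hcc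
    push_neg at hcc
    have hstep : ∀ k : ℕ, σ (j1 + (k:ZMod n)) = 2 := by
      intro k
      induction k with
      | zero => simpa using hj1
      | succ m ih =>
        have := hcc _ ih
        have heq : j1 + ((m+1 : ℕ) : ZMod n) = (j1 + (m : ZMod n)) + 1 := by push_cast; ring
        rw [heq]
        exact this
    have : σ j2 = 2 := by
      have := hstep (j2 - j1).val
      rwa [ZMod.natCast_val, ZMod.cast_id, add_sub_cancel] at this
    exact hj2 this
  obtain ⟨j, hja, hjb⟩ := hmix
  have hpos := (by decide : ∀ u v : Fin 3, u = 2 → v ≠ 2 →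
    0 < kappa u v 4 + kappa u v 5) _ _ hja hjb
  have h4 : η 4 + η 5 = ∑ j : ZMod n, (kappa (σ j) (σ (j+1)) 4 + kappa (σ j) (σ (j+1)) 5) := by
    rw [Finset.sum_add_distrib, ← hfin 4, ← hfin 5]
  rw [h4]
  calc 0 < kappa (σ j) (σ (j+1)) 4 + kappa (σ j) (σ (j+1)) 5 := hpos
    _ ≤ _ := Finset.single_le_sum
      (f := fun i => kappa (σ i) (σ (i+1)) 4 + kappa (σ i) (σ (i+1)) 5)
      (fun i _ => Nat.zero_le _) (Finset.mem_univ j)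

/-- Global bound: η·α(r,s) > 2π below the line s = r/10. -/
theorem stmt_15 (η : Fin 6 → ℕ) (hη : SNec η) (r s : ℝ)
    (h : (r, s) ∈ Delta3) (hss : s ≤ r / 10) :
    2 * Real.pi < dotNR η (alphaVec r s) := by
  obtain ⟨hs, hsr, hr1⟩ := h
  have h10r : 10*s ≤ r := by linarith
  have h101 : 10*s ≤ 1 := by linarith
  obtain ⟨hc1, hc2, -, hseq, hm⟩ := hη
  have hsum5 : η 0 + η 1 + η 2 + η 3 + η 4 + η 5 ≤ 5 := by
    simp [dotNN, Fin.sum_univ_six, vec6_five'] at hc1; omega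
  have h13 : 13 ≤ 6*(η 0 + η 1 + η 3) + 2*(η 2) + 3*(η 4 + η 5) := by
    simp [dotNN, Fin.sum_univ_six, vec6_five'] at hc2; omega
  have hze : (η 4 + η 5) % 2 = 0 := by
    have := hm.2.2
    simp [dotNN, Fin.sum_univ_six, vec6_five', Nat.even_iff] at this; omega
  have key := cases_lemma' (Real.arccos (79/121)) (Real.arcsin (1/11))
    (Real.arccos_nonneg _) (Real.arcsin_nonneg.2 (by norm_num))
    (Real.arccos_le_pi_div_two.2 (by norm_num)) arcsin_small' crit'
    (η 0 + η 1 + η 3) (η 2) (η 4 + η 5) (by omega) (by omega) hze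
    (fun hx hy => seq_conn' hseq hx hy)
  have hexp : dotNR η (alphaVec r s) = (η 0 : ℝ) * ang s 1 1 + (η 1 : ℝ) * ang s r r
      + (η 2 : ℝ) * ang s s s + (η 3 : ℝ) * ang s 1 r + (η 4 : ℝ) * ang s 1 s
      + (η 5 : ℝ) * ang s r s := by
    simp [dotNR, alphaVec, Fin.sum_univ_six, vec6_five']
    try ring
  have hA0 := ang_ge_big' hs h101 h101
  have hA1 := ang_ge_big' hs h10r h10r
  have hA3 := ang_ge_big' hs h101 h10r
  have hB4 := ang_ge_small' hs h101
  have hB5 := ang_ge_small' hs h10r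
  have hC2 := ang_sss' hs
  have t0 : (η 0 : ℝ) * (Real.pi - Real.arccos (79/121)) ≤ (η 0 : ℝ) * ang s 1 1 :=
    mul_le_mul_of_nonneg_left hA0 (Nat.cast_nonneg _)
  have t1 : (η 1 : ℝ) * (Real.pi - Real.arccos (79/121)) ≤ (η 1 : ℝ) * ang s r r :=
    mul_le_mul_of_nonneg_left hA1 (Nat.cast_nonneg _)
  have t3 : (η 3 : ℝ) * (Real.pi - Real.arccos (79/121)) ≤ (η 3 : ℝ) * ang s 1 r :=
    mul_le_mul_of_nonneg_left hA3 (Nat.cast_nonneg _)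
  have t4 : (η 4 : ℝ) * (Real.pi/2 - Real.arcsin (1/11)) ≤ (η 4 : ℝ) * ang s 1 s :=
    mul_le_mul_of_nonneg_left hB4 (Nat.cast_nonneg _)
  have t5 : (η 5 : ℝ) * (Real.pi/2 - Real.arcsin (1/11)) ≤ (η 5 : ℝ) * ang s r s :=
    mul_le_mul_of_nonneg_left hB5 (Nat.cast_nonneg _)
  rw [hexp, hC2]
  push_cast at key
  nlinarith [key, t0, t1, t3, t4, t5]

end
end

section
/- Let ζ ∈ ℕ^6 satisfy RNec(ζ) and ζ·(0,0,1,0,1,1) ≠ 0. Then for every (r,s) ∈ Δ₃, the derivative at the point s of the function t ↦ ζ·β(r,t) is strictly positive. -/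
open scoped BigOperators

noncomputable section

lemma aux_cons_val_five {α : Type*} (a0 a1 a2 a3 a4 a5 : α) :
    ![a0, a1, a2, a3, a4, a5] 5 = a5 := rfl

lemma aux_ang_right (a b s : ℝ) (ha : 0 < a) (hb : 0 < b) (hs : 0 < s) :
    ∃ d : ℝ, 0 < d ∧ HasDerivAt (fun t => ang a b t) d s := by
  set D : ℝ := 2 * (a + s) * (a + b) with hDdef
  have hDpos : 0 < D := by positivity
  have hat : HasDerivAt (fun t : ℝ => a + t) 1 s := (hasDerivAt_id s).const_add a
  have hbt : HasDerivAt (fun t : ℝ => b + t) 1 s := (hasDerivAt_id s).const_add b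
  have hN : HasDerivAt (fun t : ℝ => (a + b) ^ 2 + (a + t) ^ 2 - (b + t) ^ 2)
      (((2:ℕ) * (a + s) ^ 1 * 1) - ((2:ℕ) * (b + s) ^ 1 * 1)) s :=
    (((hat.pow 2).const_add ((a + b) ^ 2)).sub (hbt.pow 2))
  have hDd : HasDerivAt (fun t : ℝ => 2 * (a + t) * (a + b)) ((2 * 1) * (a + b)) s :=
    (hat.const_mul 2).mul_const (a + b)
  have hF : HasDerivAt (fun t : ℝ => ((a + b) ^ 2 + (a + t) ^ 2 - (b + t) ^ 2) / (2 * (a + t) * (a + b)))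
      (((((2:ℕ) * (a + s) ^ 1 * 1) - ((2:ℕ) * (b + s) ^ 1 * 1)) * (2 * (a + s) * (a + b)) -
        ((a + b) ^ 2 + (a + s) ^ 2 - (b + s) ^ 2) * ((2 * 1) * (a + b))) / (2 * (a + s) * (a + b)) ^ 2) s :=
    hN.div hDd (by positivity)
  set F : ℝ := ((a + b) ^ 2 + (a + s) ^ 2 - (b + s) ^ 2) / (2 * (a + s) * (a + b)) with hFdef
  set d0 : ℝ := ((((2:ℕ) * (a + s) ^ 1 * 1) - ((2:ℕ) * (b + s) ^ 1 * 1)) * (2 * (a + s) * (a + b)) -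
        ((a + b) ^ 2 + (a + s) ^ 2 - (b + s) ^ 2) * ((2 * 1) * (a + b))) / (2 * (a + s) * (a + b)) ^ 2 with hd0def
  have hF1 : F < 1 := by
    rw [hFdef, div_lt_one (by positivity)]
    nlinarith [mul_pos hb hs]
  have hFm1 : -1 < F := by
    rw [hFdef, lt_div_iff₀ (by positivity)]
    nlinarith [mul_pos ha (add_pos (add_pos ha hb) hs)]
  have hd0 : d0 < 0 := by
    rw [hd0def]
    apply div_neg_of_neg_of_pos _ (by positivity)
    have : (((2:ℕ):ℝ) * (a + s) ^ 1 * 1 - ((2:ℕ):ℝ) * (b + s) ^ 1 * 1) * (2 * (a + s) * (a + b)) -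
        ((a + b) ^ 2 + (a + s) ^ 2 - (b + s) ^ 2) * (2 * 1 * (a + b)) = -(8 * a * b * (a + b)) := by
      push_cast; ring
    rw [this]
    have h8 : 0 < 8 * a * b * (a + b) := by positivity
    linarith
  have hcomp : HasDerivAt (fun t => ang a b t) (-(1 / Real.sqrt (1 - F ^ 2)) * d0) s := by
    have := (Real.hasDerivAt_arccos (ne_of_gt hFm1) (ne_of_lt hF1)).comp s hF
    exact this
  refine ⟨_, ?_, hcomp⟩
  have hsq : 0 < Real.sqrt (1 - F ^ 2) := Real.sqrt_pos.2 (by nlinarith)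
  have : 0 < 1 / Real.sqrt (1 - F ^ 2) := by positivity
  nlinarith


lemma aux_ang_diag (a s : ℝ) (ha : 0 < a) (hs : 0 < s) :
    ∃ d : ℝ, 0 < d ∧ HasDerivAt (fun t => ang a t t) d s := by
  have hat : HasDerivAt (fun t : ℝ => a + t) 1 s := (hasDerivAt_id s).const_add a
  have htt : HasDerivAt (fun t : ℝ => t + t) (1 + 1) s := (hasDerivAt_id s).add (hasDerivAt_id s)
  have hN : HasDerivAt (fun t : ℝ => (a + t) ^ 2 + (a + t) ^ 2 - (t + t) ^ 2)
      ((((2:ℕ) * (a + s) ^ 1 * 1) + ((2:ℕ) * (a + s) ^ 1 * 1)) - ((2:ℕ) * (s + s) ^ 1 * (1 + 1))) s :=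
    ((hat.pow 2).add (hat.pow 2)).sub (htt.pow 2)
  have hDd : HasDerivAt (fun t : ℝ => 2 * (a + t) * (a + t)) ((2 * 1) * (a + s) + (2 * (a + s)) * 1) s :=
    (hat.const_mul 2).mul hat
  have hF : HasDerivAt
      (fun t : ℝ => ((a + t) ^ 2 + (a + t) ^ 2 - (t + t) ^ 2) / (2 * (a + t) * (a + t)))
      ((((((2:ℕ) * (a + s) ^ 1 * 1) + ((2:ℕ) * (a + s) ^ 1 * 1)) - ((2:ℕ) * (s + s) ^ 1 * (1 + 1))) *
          (2 * (a + s) * (a + s)) -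
        ((a + s) ^ 2 + (a + s) ^ 2 - (s + s) ^ 2) * ((2 * 1) * (a + s) + (2 * (a + s)) * 1)) /
        (2 * (a + s) * (a + s)) ^ 2) s :=
    hN.div hDd (by positivity)
  set F : ℝ := ((a + s) ^ 2 + (a + s) ^ 2 - (s + s) ^ 2) / (2 * (a + s) * (a + s)) with hFdef
  set d0 : ℝ := (((((2:ℕ) * (a + s) ^ 1 * 1) + ((2:ℕ) * (a + s) ^ 1 * 1)) - ((2:ℕ) * (s + s) ^ 1 * (1 + 1))) *
          (2 * (a + s) * (a + s)) -
        ((a + s) ^ 2 + (a + s) ^ 2 - (s + s) ^ 2) * ((2 * 1) * (a + s) + (2 * (a + s)) * 1)) /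
        (2 * (a + s) * (a + s)) ^ 2 with hd0def
  have hF1 : F < 1 := by
    rw [hFdef, div_lt_one (by positivity)]
    nlinarith [mul_pos hs hs]
  have hFm1 : -1 < F := by
    rw [hFdef, lt_div_iff₀ (by positivity)]
    nlinarith [mul_pos ha (by linarith : (0:ℝ) < a + 2 * s)]
  have hd0 : d0 < 0 := by
    rw [hd0def]
    apply div_neg_of_neg_of_pos _ (by positivity)
    have : ((((2:ℕ):ℝ) * (a + s) ^ 1 * 1 + ((2:ℕ):ℝ) * (a + s) ^ 1 * 1) - ((2:ℕ):ℝ) * (s + s) ^ 1 * (1 + 1)) *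
          (2 * (a + s) * (a + s)) -
        ((a + s) ^ 2 + (a + s) ^ 2 - (s + s) ^ 2) * (2 * 1 * (a + s) + 2 * (a + s) * 1)
        = -(16 * a * s * (a + s)) := by push_cast; ring
    rw [this]
    have h16 : 0 < 16 * a * s * (a + s) := by positivity
    linarith
  have hcomp : HasDerivAt (fun t => ang a t t) (-(1 / Real.sqrt (1 - F ^ 2)) * d0) s :=
    (Real.hasDerivAt_arccos (ne_of_gt hFm1) (ne_of_lt hF1)).comp s hF
  refine ⟨_, ?_, hcomp⟩
  have hsq : 0 < Real.sqrt (1 - F ^ 2) := Real.sqrt_pos.2 (by nlinarith)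
  have h1 : 0 < 1 / Real.sqrt (1 - F ^ 2) := by positivity
  nlinarith


/-- The partial derivative of ζ·β(r,·) is strictly positive on Δ₃ when ζ·(0,0,1,0,1,1) ≠ 0. -/
theorem stmt_16 (ζ : Fin 6 → ℕ) (hζ : RNec ζ) (hv : dotNN ζ ![0,0,1,0,1,1] ≠ 0)
    (r s : ℝ) (h : (r, s) ∈ Delta3) :
    ∃ d : ℝ, 0 < d ∧ HasDerivAt (fun t => dotNR ζ (betaVec r t)) d s := by

  obtain ⟨hs, hsr, hr1⟩ := h
  have hr : 0 < r := hs.trans hsr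
  obtain ⟨d2, hd2pos, hd2⟩ := aux_ang_diag r s hr hs
  obtain ⟨d4, hd4pos, hd4⟩ := aux_ang_right r 1 s hr one_pos hs
  obtain ⟨d5, hd5pos, hd5⟩ := aux_ang_right r r s hr hr hs
  have hveq : (fun t => dotNR ζ (betaVec r t)) = fun t =>
      ((ζ 0 : ℝ) * ang r 1 1 + (ζ 1 : ℝ) * ang r r r + (ζ 3 : ℝ) * ang r 1 r)
      + ((ζ 2 : ℝ) * ang r t t + ((ζ 4 : ℝ) * ang r 1 t + (ζ 5 : ℝ) * ang r r t)) := by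
    funext t
    simp [dotNR, betaVec, Fin.sum_univ_six, aux_cons_val_five]
    ring
  have hD : HasDerivAt (fun t => dotNR ζ (betaVec r t))
      ((ζ 2 : ℝ) * d2 + ((ζ 4 : ℝ) * d4 + (ζ 5 : ℝ) * d5)) s := by
    rw [hveq]
    exact ((hd2.const_mul _).add ((hd4.const_mul _).add (hd5.const_mul _))).const_add _
  refine ⟨_, ?_, hD⟩
  have h2 : (0:ℝ) ≤ (ζ 2 : ℝ) * d2 := mul_nonneg (Nat.cast_nonneg _) hd2pos.le
  have h4 : (0:ℝ) ≤ (ζ 4 : ℝ) * d4 := mul_nonneg (Nat.cast_nonneg _) hd4pos.le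
  have h5 : (0:ℝ) ≤ (ζ 5 : ℝ) * d5 := mul_nonneg (Nat.cast_nonneg _) hd5pos.le
  have hne := hv
  simp [dotNN, Fin.sum_univ_six, aux_cons_val_five] at hne
  have hcases : 0 < ζ 2 ∨ 0 < ζ 4 ∨ 0 < ζ 5 := by omega
  rcases hcases with hc | hc | hc
  · have hc' : (1:ℝ) ≤ (ζ 2 : ℝ) := by exact_mod_cast hc
    nlinarith
  · have hc' : (1:ℝ) ≤ (ζ 4 : ℝ) := by exact_mod_cast hc
    nlinarith
  · have hc' : (1:ℝ) ≤ (ζ 5 : ℝ) := by exact_mod_cast hc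
    nlinarith

end
end

section
/- Let ζ ∈ ℕ^6 satisfy RNec(ζ) and ζ₃ ≥ 35 (where ζ₃ is the third coordinate of ζ). Then ζ·β(r,s) > 2π for every (r,s) ∈ Δ₃ with s ≥ r/10. -/
open scoped BigOperators

noncomputable section

/-- Global bound: if ζ₃ ≥ 35 then ζ·β(r,s) > 2π above the line s = r/10. -/
theorem stmt_17 (ζ : Fin 6 → ℕ) (hζ : RNec ζ) (h3 : 35 ≤ ζ 2)
    (r s : ℝ) (h : (r, s) ∈ Delta3) (hss : r / 10 ≤ s) :
    2 * Real.pi < dotNR ζ (betaVec r s) := by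
  obtain ⟨hs, hsr, hr1⟩ := h
  simp only at hs hsr hr1
  have hr : (0:ℝ) < r := hs.trans hsr
  have hden : (0:ℝ) < 2 * (r + s) * (r + s) := by positivity
  set x : ℝ := ((r + s) ^ 2 + (r + s) ^ 2 - (s + s) ^ 2) / (2 * (r + s) * (r + s)) with hxdef
  have hx1 : x ≤ 119 / 121 := by
    rw [hxdef, div_le_iff₀ hden]
    nlinarith [sq_nonneg (r - 10 * s), mul_pos hs hr]
  have hxm1 : (-1:ℝ) ≤ x := by
    rw [hxdef, le_div_iff₀ hden]
    nlinarith [sq_nonneg (r + s), sq_nonneg r, mul_pos hr hs]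
  have hpi := Real.pi_pos
  have hpi315 := Real.pi_lt_d2
  -- cos (2π/35) > 119/121
  have hc : (119:ℝ) / 121 < Real.cos (2 * Real.pi / 35) := by
    have h1 : (2 * Real.pi / 35) ≠ 0 := by positivity
    have h2 := Real.one_sub_sq_div_two_lt_cos h1
    nlinarith
  have hcos_mem : Real.cos (2 * Real.pi / 35) ∈ Set.Icc (-1:ℝ) 1 :=
    ⟨Real.neg_one_le_cos _, Real.cos_le_one _⟩
  have hmem119 : (119:ℝ)/121 ∈ Set.Icc (-1:ℝ) 1 := by constructor <;> norm_num
  have hxmem : x ∈ Set.Icc (-1:ℝ) 1 := ⟨hxm1, by linarith⟩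
  have hstep1 : Real.arccos (Real.cos (2 * Real.pi / 35)) < Real.arccos ((119:ℝ)/121) :=
    Real.strictAntiOn_arccos hmem119 hcos_mem hc
  have hstep2 : Real.arccos ((119:ℝ)/121) ≤ Real.arccos x :=
    Real.strictAntiOn_arccos.antitoneOn hxmem hmem119 hx1
  have harc : Real.arccos (Real.cos (2 * Real.pi / 35)) = 2 * Real.pi / 35 := by
    apply Real.arccos_cos (by positivity)
    linarith
  have hkey : 2 * Real.pi / 35 < Real.arccos x := by
    rw [← harc]; linarith
  -- expand the dot product
  have hnonneg : ∀ v : ℝ, 0 ≤ Real.arccos v := Real.arccos_nonneg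
  have h35 : (35:ℝ) ≤ (ζ 2 : ℝ) := by exact_mod_cast h3
  have hterm : 2 * Real.pi < (ζ 2 : ℝ) * Real.arccos x := by
    have h1 : (35:ℝ) * (2 * Real.pi / 35) < (35:ℝ) * Real.arccos x := by
      apply mul_lt_mul_of_pos_left hkey (by norm_num)
    have h2 : (35:ℝ) * Real.arccos x ≤ (ζ 2 : ℝ) * Real.arccos x :=
      mul_le_mul_of_nonneg_right h35 (hnonneg x)
    have : (35:ℝ) * (2 * Real.pi / 35) = 2 * Real.pi := by ring
    linarith
  have hbv2 : betaVec r s 2 = Real.arccos x := by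
    simp [betaVec, ang, hxdef]
  rw [dotNR, Fin.sum_univ_six]
  have e0 : betaVec r s 0 = Real.arccos _ := rfl
  have hb : ∀ i : Fin 6, 0 ≤ betaVec r s i := by
    intro i
    fin_cases i <;> simp [betaVec, ang] <;> exact Real.arccos_nonneg _
  have t0 := mul_nonneg (Nat.cast_nonneg (ζ 0) : (0:ℝ) ≤ _) (hb 0)
  have t1 := mul_nonneg (Nat.cast_nonneg (ζ 1) : (0:ℝ) ≤ _) (hb 1)
  have t3 := mul_nonneg (Nat.cast_nonneg (ζ 3) : (0:ℝ) ≤ _) (hb 3)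
  have t4 := mul_nonneg (Nat.cast_nonneg (ζ 4) : (0:ℝ) ≤ _) (hb 4)
  have t5 := mul_nonneg (Nat.cast_nonneg (ζ 5) : (0:ℝ) ≤ _) (hb 5)
  rw [hbv2] at *
  linarith [hterm]

end
end

section
/- Let (η,ζ) ∈ K. If (r₁,s₁) ∈ Δ₃ and (r₂,s₂) ∈ Δ₃ both satisfy η·α(rᵢ,sᵢ) = 2π and ζ·β(rᵢ,sᵢ) = 2π (i = 1,2), then (r₁,s₁) = (r₂,s₂); that is, there exists at most one point of Δ₃ at which both η·α and ζ·β take the value 2π. -/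
open scoped BigOperators

noncomputable section

namespace Stmt18Aux

lemma arccos_le_arccos' {x y : ℝ} (h : x ≤ y) : Real.arccos y ≤ Real.arccos x := by
  unfold Real.arccos
  have := Real.monotone_arcsin h
  linarith

lemma ang_formula (a b c : ℝ) (ha : 0 < a) (hb : 0 < b) (hc : 0 < c) :
    ang a b c = Real.arccos ((a*(a+b+c) - b*c)/(a*(a+b+c) + b*c)) := by
  unfold ang
  congr 1
  have h1 : (2*(a+c)*(a+b)) ≠ 0 := by positivity
  have h2 : (a*(a+b+c) + b*c) ≠ 0 := by positivity
  field_simp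
  ring

lemma ang_le_ang {a b c a' b' c' : ℝ} (ha : 0 < a) (hb : 0 < b) (hc : 0 < c)
    (ha' : 0 < a') (hb' : 0 < b') (hc' : 0 < c')
    (h : b' * c' * (a * (a+b+c)) ≤ b * c * (a' * (a'+b'+c'))) :
    ang a' b' c' ≤ ang a b c := by
  rw [ang_formula a b c ha hb hc, ang_formula a' b' c' ha' hb' hc']
  apply arccos_le_arccos'
  rw [div_le_div_iff₀ (by positivity) (by positivity)]
  nlinarith

lemma ang_lt_ang {a b c a' b' c' : ℝ} (ha : 0 < a) (hb : 0 < b) (hc : 0 < c)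
    (ha' : 0 < a') (hb' : 0 < b') (hc' : 0 < c')
    (h : b' * c' * (a * (a+b+c)) < b * c * (a' * (a'+b'+c'))) :
    ang a' b' c' < ang a b c := by
  rw [ang_formula a b c ha hb hc, ang_formula a' b' c' ha' hb' hc']
  have hd : (0:ℝ) < a*(a+b+c) + b*c := by positivity
  have hd' : (0:ℝ) < a'*(a'+b'+c') + b'*c' := by positivity
  apply Real.strictAntiOn_arccos
  · exact ⟨by rw [le_div_iff₀ hd]; nlinarith, by rw [div_le_one hd]; nlinarith⟩
  · exact ⟨by rw [le_div_iff₀ hd']; nlinarith, by rw [div_le_one hd']; nlinarith⟩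
  · rw [div_lt_div_iff₀ hd hd']; nlinarith

lemma dotNR_le (ξ : Fin 6 → ℕ) {u v : Fin 6 → ℝ} (h : ∀ i, u i ≤ v i) :
    dotNR ξ u ≤ dotNR ξ v :=
  Finset.sum_le_sum fun i _ => mul_le_mul_of_nonneg_left (h i) (Nat.cast_nonneg _)

lemma dotNR_lt (ξ : Fin 6 → ℕ) {u v : Fin 6 → ℝ} (h : ∀ i, u i ≤ v i)
    (h' : ∃ i, ξ i ≠ 0 ∧ u i < v i) : dotNR ξ u < dotNR ξ v := by
  obtain ⟨i, hi, hlt⟩ := h'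
  refine Finset.sum_lt_sum (fun j _ => mul_le_mul_of_nonneg_left (h j) (Nat.cast_nonneg _))
    ⟨i, Finset.mem_univ i, ?_⟩
  have h1 : (1:ℝ) ≤ (ξ i : ℝ) := by exact_mod_cast Nat.one_le_iff_ne_zero.2 hi
  exact mul_lt_mul_of_pos_left hlt (by linarith)

/-- α is componentwise antitone in s. -/
lemma alphaVec_le_s {r s s' : ℝ} (hr : 0 < r) (hs : 0 < s) (hs' : 0 < s') (h : s ≤ s') :
    ∀ i, alphaVec r s' i ≤ alphaVec r s i := by
  intro i
  fin_cases i <;> simp only [alphaVec, Matrix.cons_val_zero, Matrix.cons_val_one,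
    Matrix.head_cons, Matrix.cons_val_two, Matrix.tail_cons, Matrix.cons_val_three,
    Matrix.cons_val_four, Matrix.cons_val_fin_one, Fin.isValue]
  · exact ang_le_ang hs one_pos one_pos hs' one_pos one_pos (by nlinarith)
  · refine ang_le_ang hs hr hr hs' hr hr ?_
    nlinarith [mul_nonneg (mul_nonneg hr.le hr.le) (mul_nonneg (sub_nonneg.2 h) (by linarith : (0:ℝ) ≤ s' + s)),
      mul_nonneg (mul_nonneg (mul_nonneg hr.le hr.le) hr.le) (sub_nonneg.2 h)]
  · exact ang_le_ang hs hs hs hs' hs' hs' (by nlinarith)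
  · refine ang_le_ang hs one_pos hr hs' one_pos hr ?_
    nlinarith [mul_nonneg hr.le (mul_nonneg (sub_nonneg.2 h) (by linarith : (0:ℝ) ≤ s' + s)),
      mul_nonneg hr.le (mul_nonneg (sub_nonneg.2 h) (by linarith : (0:ℝ) ≤ 1 + r))]
  · refine ang_le_ang hs one_pos hs hs' one_pos hs' ?_
    nlinarith [mul_nonneg (mul_nonneg hs.le hs'.le) (sub_nonneg.2 h)]
  · refine ang_le_ang hs hr hs hs' hr hs' ?_
    nlinarith [mul_nonneg (mul_nonneg (mul_nonneg hr.le hs.le) hs'.le) (sub_nonneg.2 h)]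

/-- η·α is strictly antitone in s. -/
lemma alpha_anti_s (η : Fin 6 → ℕ) {r s s' : ℝ} (hr : 0 < r) (hs : 0 < s) (hs' : 0 < s')
    (h : s < s') (hη : η 0 ≠ 0 ∨ η 1 ≠ 0 ∨ η 3 ≠ 0 ∨ η 4 ≠ 0 ∨ η 5 ≠ 0) :
    dotNR η (alphaVec r s') < dotNR η (alphaVec r s) := by
  refine dotNR_lt η (alphaVec_le_s hr hs hs' h.le) ?_
  rcases hη with h0 | h1 | h3 | h4 | h5
  · exact ⟨0, h0, ang_lt_ang hs one_pos one_pos hs' one_pos one_pos (by nlinarith)⟩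
  · refine ⟨1, h1, ang_lt_ang hs hr hr hs' hr hr ?_⟩
    nlinarith [mul_pos (mul_pos hr hr) (show (0:ℝ) < s'*(s'+r+r) - s*(s+r+r) by nlinarith)]
  · refine ⟨3, h3, ang_lt_ang hs one_pos hr hs' one_pos hr ?_⟩
    nlinarith [mul_pos hr (show (0:ℝ) < s'*(s'+1+r) - s*(s+1+r) by nlinarith)]
  · refine ⟨4, h4, ang_lt_ang hs one_pos hs hs' one_pos hs' ?_⟩
    nlinarith [mul_pos (mul_pos hs hs') (sub_pos.2 h)]
  · refine ⟨5, h5, ang_lt_ang hs hr hs hs' hr hs' ?_⟩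
    nlinarith [mul_pos (mul_pos (mul_pos hr hs) hs') (sub_pos.2 h)]

/-- α is componentwise monotone in r. -/
lemma alphaVec_le_r {r r' s : ℝ} (hs : 0 < s) (hr : 0 < r) (hr' : 0 < r')
    (h : r ≤ r') : ∀ i, alphaVec r s i ≤ alphaVec r' s i := by
  intro i
  fin_cases i <;> simp only [alphaVec, Matrix.cons_val_zero, Matrix.cons_val_one,
    Matrix.head_cons, Matrix.cons_val_two, Matrix.tail_cons, Matrix.cons_val_three,
    Matrix.cons_val_four, Matrix.cons_val_fin_one, Fin.isValue]
  · exact ang_le_ang hs one_pos one_pos hs one_pos one_pos le_rfl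
  · refine ang_le_ang hs hr' hr' hs hr hr ?_
    nlinarith [mul_nonneg (mul_nonneg hs.le hs.le) (mul_nonneg (sub_nonneg.2 h) (by linarith : (0:ℝ) ≤ r' + r)),
      mul_nonneg (mul_nonneg hs.le (mul_nonneg hr.le hr'.le)) (sub_nonneg.2 h)]
  · exact ang_le_ang hs hs hs hs hs hs le_rfl
  · refine ang_le_ang hs one_pos hr' hs one_pos hr ?_
    nlinarith [mul_nonneg (mul_nonneg hs.le (sub_nonneg.2 h)) (by linarith : (0:ℝ) ≤ s + 1)]
  · exact ang_le_ang hs one_pos hs hs one_pos hs le_rfl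
  · refine ang_le_ang hs hr' hs hs hr hs ?_
    nlinarith [mul_nonneg (mul_nonneg (mul_nonneg hs.le hs.le) hs.le) (sub_nonneg.2 h)]

/-- η·α is monotone in r. -/
lemma alpha_mono_r (η : Fin 6 → ℕ) {r r' s : ℝ} (hs : 0 < s) (hr : 0 < r) (hr' : 0 < r')
    (h : r ≤ r') : dotNR η (alphaVec r s) ≤ dotNR η (alphaVec r' s) :=
  dotNR_le η (alphaVec_le_r hs hr hr' h)

/-- β is componentwise antitone in r. -/
lemma betaVec_le_r {r r' s : ℝ} (hs : 0 < s) (hr : 0 < r) (hr' : 0 < r') (h : r ≤ r') :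
    ∀ i, betaVec r' s i ≤ betaVec r s i := by
  intro i
  fin_cases i <;> simp only [betaVec, Matrix.cons_val_zero, Matrix.cons_val_one,
    Matrix.head_cons, Matrix.cons_val_two, Matrix.tail_cons, Matrix.cons_val_three,
    Matrix.cons_val_four, Matrix.cons_val_fin_one, Fin.isValue]
  · exact ang_le_ang hr one_pos one_pos hr' one_pos one_pos (by nlinarith)
  · exact ang_le_ang hr hr hr hr' hr' hr' (by nlinarith)
  · refine ang_le_ang hr hs hs hr' hs hs ?_
    nlinarith [mul_nonneg (mul_nonneg hs.le hs.le) (mul_nonneg (sub_nonneg.2 h) (by linarith : (0:ℝ) ≤ r' + r)),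
      mul_nonneg (mul_nonneg (mul_nonneg hs.le hs.le) hs.le) (sub_nonneg.2 h)]
  · refine ang_le_ang hr one_pos hr hr' one_pos hr' ?_
    nlinarith [mul_nonneg (mul_nonneg hr.le hr'.le) (sub_nonneg.2 h)]
  · refine ang_le_ang hr one_pos hs hr' one_pos hs ?_
    nlinarith [mul_nonneg hs.le (mul_nonneg (sub_nonneg.2 h) (by linarith : (0:ℝ) ≤ r' + r)),
      mul_nonneg hs.le (mul_nonneg (sub_nonneg.2 h) (by linarith : (0:ℝ) ≤ 1 + s))]
  · refine ang_le_ang hr hr hs hr' hr' hs ?_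
    nlinarith [mul_nonneg (mul_nonneg (mul_nonneg hr.le hr'.le) hs.le) (sub_nonneg.2 h)]

/-- ζ·β is strictly antitone in r. -/
lemma beta_anti_r (ζ : Fin 6 → ℕ) {r r' s : ℝ} (hs : 0 < s) (hr : 0 < r) (hr' : 0 < r')
    (h : r < r') (hζ : ζ 0 ≠ 0 ∨ ζ 2 ≠ 0 ∨ ζ 3 ≠ 0 ∨ ζ 4 ≠ 0 ∨ ζ 5 ≠ 0) :
    dotNR ζ (betaVec r' s) < dotNR ζ (betaVec r s) := by
  refine dotNR_lt ζ (betaVec_le_r hs hr hr' h.le) ?_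
  rcases hζ with h0 | h2 | h3 | h4 | h5
  · exact ⟨0, h0, ang_lt_ang hr one_pos one_pos hr' one_pos one_pos (by nlinarith)⟩
  · refine ⟨2, h2, ang_lt_ang hr hs hs hr' hs hs ?_⟩
    nlinarith [mul_pos (mul_pos hs hs) (show (0:ℝ) < r'*(r'+s+s) - r*(r+s+s) by nlinarith)]
  · refine ⟨3, h3, ang_lt_ang hr one_pos hr hr' one_pos hr' ?_⟩
    nlinarith [mul_pos (mul_pos hr hr') (sub_pos.2 h)]
  · refine ⟨4, h4, ang_lt_ang hr one_pos hs hr' one_pos hs ?_⟩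
    nlinarith [mul_pos hs (show (0:ℝ) < r'*(r'+1+s) - r*(r+1+s) by nlinarith)]
  · refine ⟨5, h5, ang_lt_ang hr hr hs hr' hr' hs ?_⟩
    nlinarith [mul_pos (mul_pos (mul_pos hr hr') hs) (sub_pos.2 h)]

/-- β is componentwise monotone in s. -/
lemma betaVec_le_s {r s s' : ℝ} (hr : 0 < r) (hs : 0 < s) (hs' : 0 < s')
    (h : s ≤ s') : ∀ i, betaVec r s i ≤ betaVec r s' i := by
  intro i
  fin_cases i <;> simp only [betaVec, Matrix.cons_val_zero, Matrix.cons_val_one,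
    Matrix.head_cons, Matrix.cons_val_two, Matrix.tail_cons, Matrix.cons_val_three,
    Matrix.cons_val_four, Matrix.cons_val_fin_one, Fin.isValue]
  · exact ang_le_ang hr one_pos one_pos hr one_pos one_pos le_rfl
  · exact ang_le_ang hr hr hr hr hr hr le_rfl
  · refine ang_le_ang hr hs' hs' hr hs hs ?_
    nlinarith [mul_nonneg (mul_nonneg hr.le hr.le) (mul_nonneg (sub_nonneg.2 h) (by linarith : (0:ℝ) ≤ s' + s)),
      mul_nonneg (mul_nonneg hr.le (mul_nonneg hs.le hs'.le)) (sub_nonneg.2 h)]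
  · exact ang_le_ang hr one_pos hr hr one_pos hr le_rfl
  · refine ang_le_ang hr one_pos hs' hr one_pos hs ?_
    nlinarith [mul_nonneg (mul_nonneg hr.le (sub_nonneg.2 h)) (by linarith : (0:ℝ) ≤ r + 1)]
  · refine ang_le_ang hr hr hs' hr hr hs ?_
    nlinarith [mul_nonneg (mul_nonneg (mul_nonneg hr.le hr.le) hr.le) (sub_nonneg.2 h)]

/-- ζ·β is monotone in s. -/
lemma beta_mono_s (ζ : Fin 6 → ℕ) {r s s' : ℝ} (hr : 0 < r) (hs : 0 < s) (hs' : 0 < s')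
    (h : s ≤ s') : dotNR ζ (betaVec r s) ≤ dotNR ζ (betaVec r s') :=
  dotNR_le ζ (betaVec_le_s hr hs hs' h)

/-- α scaling: componentwise. -/
lemma alphaVec_le_scale {r s μ : ℝ} (hr : 0 < r) (hs : 0 < s) (hμ : 1 ≤ μ) :
    ∀ i, alphaVec (μ*r) (μ*s) i ≤ alphaVec r s i := by
  have hμ0 : 0 < μ := lt_of_lt_of_le one_pos hμ
  intro i
  fin_cases i <;> simp only [alphaVec, Matrix.cons_val_zero, Matrix.cons_val_one,
    Matrix.head_cons, Matrix.cons_val_two, Matrix.tail_cons, Matrix.cons_val_three,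
    Matrix.cons_val_four, Matrix.cons_val_fin_one, Fin.isValue]
  · refine ang_le_ang hs one_pos one_pos (by positivity) one_pos one_pos ?_
    nlinarith [mul_nonneg (mul_nonneg hs.le hs.le) (mul_nonneg (sub_nonneg.2 hμ) (by linarith : (0:ℝ) ≤ μ + 1)),
      mul_nonneg hs.le (sub_nonneg.2 hμ)]
  · exact ang_le_ang hs hr hr (by positivity) (by positivity) (by positivity) (le_of_eq (by ring))
  · exact ang_le_ang hs hs hs (by positivity) (by positivity) (by positivity) (le_of_eq (by ring))
  · refine ang_le_ang hs one_pos hr (by positivity) one_pos (by positivity) ?_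
    nlinarith [mul_nonneg (mul_nonneg (mul_nonneg (mul_nonneg hμ0.le hr.le) hs.le) (sub_nonneg.2 hμ)) (by linarith : (0:ℝ) ≤ s + r)]
  · refine ang_le_ang hs one_pos hs (by positivity) one_pos (by positivity) ?_
    nlinarith [mul_nonneg (mul_nonneg (mul_nonneg (mul_nonneg hμ0.le hs.le) hs.le) hs.le) (sub_nonneg.2 hμ)]
  · exact ang_le_ang hs hr hs (by positivity) (by positivity) (by positivity) (le_of_eq (by ring))

lemma alpha_scale_le (η : Fin 6 → ℕ) {r s μ : ℝ} (hr : 0 < r) (hs : 0 < s) (hμ : 1 ≤ μ) :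
    dotNR η (alphaVec (μ*r) (μ*s)) ≤ dotNR η (alphaVec r s) :=
  dotNR_le η (alphaVec_le_scale hr hs hμ)

lemma alpha_scale_lt (η : Fin 6 → ℕ) {r s μ : ℝ} (hr : 0 < r) (hs : 0 < s) (hμ : 1 < μ)
    (hη : η 0 ≠ 0 ∨ η 3 ≠ 0 ∨ η 4 ≠ 0) :
    dotNR η (alphaVec (μ*r) (μ*s)) < dotNR η (alphaVec r s) := by
  have hμ0 : 0 < μ := lt_trans one_pos hμ
  refine dotNR_lt η (alphaVec_le_scale hr hs hμ.le) ?_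
  rcases hη with h0 | h3 | h4
  · refine ⟨0, h0, ang_lt_ang hs one_pos one_pos (by positivity) one_pos one_pos ?_⟩
    nlinarith [mul_nonneg (mul_nonneg hs.le hs.le) (mul_nonneg (sub_nonneg.2 hμ.le) (by linarith : (0:ℝ) ≤ μ + 1)),
      mul_pos hs (sub_pos.2 hμ)]
  · refine ⟨3, h3, ang_lt_ang hs one_pos hr (by positivity) one_pos (by positivity) ?_⟩
    nlinarith [mul_pos (mul_pos (mul_pos (mul_pos hμ0 hr) hs) (sub_pos.2 hμ)) (by linarith : (0:ℝ) < s + r)]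
  · refine ⟨4, h4, ang_lt_ang hs one_pos hs (by positivity) one_pos (by positivity) ?_⟩
    nlinarith [mul_pos (mul_pos (mul_pos (mul_pos hμ0 hs) hs) hs) (sub_pos.2 hμ)]

/-- β scaling: componentwise. -/
lemma betaVec_le_scale {r s μ : ℝ} (hr : 0 < r) (hs : 0 < s) (hμ : 1 ≤ μ) :
    ∀ i, betaVec (μ*r) (μ*s) i ≤ betaVec r s i := by
  have hμ0 : 0 < μ := lt_of_lt_of_le one_pos hμ
  intro i
  fin_cases i <;> simp only [betaVec, Matrix.cons_val_zero, Matrix.cons_val_one,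
    Matrix.head_cons, Matrix.cons_val_two, Matrix.tail_cons, Matrix.cons_val_three,
    Matrix.cons_val_four, Matrix.cons_val_fin_one, Fin.isValue]
  · refine ang_le_ang hr one_pos one_pos (by positivity) one_pos one_pos ?_
    nlinarith [mul_nonneg (mul_nonneg hr.le hr.le) (mul_nonneg (sub_nonneg.2 hμ) (by linarith : (0:ℝ) ≤ μ + 1)),
      mul_nonneg hr.le (sub_nonneg.2 hμ)]
  · exact ang_le_ang hr hr hr (by positivity) (by positivity) (by positivity) (le_of_eq (by ring))
  · exact ang_le_ang hr hs hs (by positivity) (by positivity) (by positivity) (le_of_eq (by ring))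
  · refine ang_le_ang hr one_pos hr (by positivity) one_pos (by positivity) ?_
    nlinarith [mul_nonneg (mul_nonneg (mul_nonneg (mul_nonneg hμ0.le hr.le) hr.le) hr.le) (sub_nonneg.2 hμ)]
  · refine ang_le_ang hr one_pos hs (by positivity) one_pos (by positivity) ?_
    nlinarith [mul_nonneg (mul_nonneg (mul_nonneg (mul_nonneg hμ0.le hr.le) hs.le) (sub_nonneg.2 hμ)) (by linarith : (0:ℝ) ≤ r + s)]
  · exact ang_le_ang hr hr hs (by positivity) (by positivity) (by positivity) (le_of_eq (by ring))

lemma beta_scale_le (ζ : Fin 6 → ℕ) {r s μ : ℝ} (hr : 0 < r) (hs : 0 < s) (hμ : 1 ≤ μ) :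
    dotNR ζ (betaVec (μ*r) (μ*s)) ≤ dotNR ζ (betaVec r s) :=
  dotNR_le ζ (betaVec_le_scale hr hs hμ)

lemma beta_scale_lt (ζ : Fin 6 → ℕ) {r s μ : ℝ} (hr : 0 < r) (hs : 0 < s) (hμ : 1 < μ)
    (hζ : ζ 0 ≠ 0 ∨ ζ 3 ≠ 0 ∨ ζ 4 ≠ 0) :
    dotNR ζ (betaVec (μ*r) (μ*s)) < dotNR ζ (betaVec r s) := by
  have hμ0 : 0 < μ := lt_trans one_pos hμ
  refine dotNR_lt ζ (betaVec_le_scale hr hs hμ.le) ?_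
  rcases hζ with h0 | h3 | h4
  · refine ⟨0, h0, ang_lt_ang hr one_pos one_pos (by positivity) one_pos one_pos ?_⟩
    nlinarith [mul_nonneg (mul_nonneg hr.le hr.le) (mul_nonneg (sub_nonneg.2 hμ.le) (by linarith : (0:ℝ) ≤ μ + 1)),
      mul_pos hr (sub_pos.2 hμ)]
  · refine ⟨3, h3, ang_lt_ang hr one_pos hr (by positivity) one_pos (by positivity) ?_⟩
    nlinarith [mul_pos (mul_pos (mul_pos (mul_pos hμ0 hr) hr) hr) (sub_pos.2 hμ)]
  · refine ⟨4, h4, ang_lt_ang hr one_pos hs (by positivity) one_pos (by positivity) ?_⟩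
    nlinarith [mul_pos (mul_pos (mul_pos (mul_pos hμ0 hr) hs) (sub_pos.2 hμ)) (by linarith : (0:ℝ) < r + s)]

lemma extract1 (ξ : Fin 6 → ℕ) (h : dotNN ξ ![1,1,0,1,1,1] ≠ 0) :
    ξ 0 ≠ 0 ∨ ξ 1 ≠ 0 ∨ ξ 3 ≠ 0 ∨ ξ 4 ≠ 0 ∨ ξ 5 ≠ 0 := by
  simp [dotNN, Fin.sum_univ_six] at h
  omega

lemma extract2 (ξ : Fin 6 → ℕ) (h : dotNN ξ ![1,0,1,1,1,1] ≠ 0) :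
    ξ 0 ≠ 0 ∨ ξ 2 ≠ 0 ∨ ξ 3 ≠ 0 ∨ ξ 4 ≠ 0 ∨ ξ 5 ≠ 0 := by
  simp [dotNN, Fin.sum_univ_six] at h
  omega

lemma extract3 (ξ : Fin 6 → ℕ) (h : dotNN ξ ![1,0,0,1,1,0] ≠ 0) :
    ξ 0 ≠ 0 ∨ ξ 3 ≠ 0 ∨ ξ 4 ≠ 0 := by
  simp [dotNN, Fin.sum_univ_six,
    show (![1,0,0,1,1,0] : Fin 6 → ℕ) 5 = 0 from rfl] at h
  omega

/-- Main key lemma assuming r₁ ≤ r₂. -/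
lemma key (η ζ : Fin 6 → ℕ)
    (hη1 : η 0 ≠ 0 ∨ η 1 ≠ 0 ∨ η 3 ≠ 0 ∨ η 4 ≠ 0 ∨ η 5 ≠ 0)
    (hζ1 : ζ 0 ≠ 0 ∨ ζ 2 ≠ 0 ∨ ζ 3 ≠ 0 ∨ ζ 4 ≠ 0 ∨ ζ 5 ≠ 0)
    (hcond : (η 0 ≠ 0 ∨ η 3 ≠ 0 ∨ η 4 ≠ 0) ∨ (ζ 0 ≠ 0 ∨ ζ 3 ≠ 0 ∨ ζ 4 ≠ 0))
    {r₁ s₁ r₂ s₂ : ℝ} (h1 : (r₁, s₁) ∈ Delta3) (h2 : (r₂, s₂) ∈ Delta3)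
    (ha1 : dotNR η (alphaVec r₁ s₁) = 2 * Real.pi)
    (hb1 : dotNR ζ (betaVec r₁ s₁) = 2 * Real.pi)
    (ha2 : dotNR η (alphaVec r₂ s₂) = 2 * Real.pi)
    (hb2 : dotNR ζ (betaVec r₂ s₂) = 2 * Real.pi)
    (hr : r₁ ≤ r₂) : r₁ = r₂ ∧ s₁ = s₂ := by
  obtain ⟨hs₁, hsr₁, hr₁1⟩ := h1
  obtain ⟨hs₂, hsr₂, hr₂1⟩ := h2
  simp only at hs₁ hsr₁ hr₁1 hs₂ hsr₂ hr₂1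
  have hr₁ : 0 < r₁ := lt_trans hs₁ hsr₁
  have hr₂ : 0 < r₂ := lt_trans hs₂ hsr₂
  rcases eq_or_lt_of_le hr with heq | hlt
  · subst heq
    refine ⟨rfl, ?_⟩
    rcases lt_trichotomy s₁ s₂ with h | h | h
    · have := alpha_anti_s η hr₁ hs₁ hs₂ h hη1
      rw [ha1, ha2] at this; linarith
    · exact h
    · have := alpha_anti_s η hr₁ hs₂ hs₁ h hη1
      rw [ha1, ha2] at this; linarith
  · exfalso
    -- step A: s₁ ≤ s₂
    have hs12 : s₁ ≤ s₂ := by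
      by_contra hcon
      push_neg at hcon
      have t1 : dotNR η (alphaVec r₂ s₁) < dotNR η (alphaVec r₂ s₂) :=
        alpha_anti_s η hr₂ hs₂ hs₁ hcon hη1
      have t2 : dotNR η (alphaVec r₁ s₁) ≤ dotNR η (alphaVec r₂ s₁) :=
        alpha_mono_r η hs₁ hr₁ hr₂ hr
      rw [ha1] at t2; rw [ha2] at t1; linarith
    set l := r₂ / r₁ with hl_def
    have hl1 : 1 < l := (one_lt_div hr₁).2 hlt
    have hlr : l * r₁ = r₂ := div_mul_cancel₀ r₂ (ne_of_gt hr₁)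
    have hls₁ : 0 < l * s₁ := by positivity
    -- step B: s₂ ≤ l * s₁
    have hBle : dotNR η (alphaVec r₂ (l * s₁)) ≤ 2 * Real.pi := by
      have := alpha_scale_le η hr₁ hs₁ hl1.le
      rw [hlr, ha1] at this; exact this
    have hB : s₂ ≤ l * s₁ := by
      by_contra hcon
      push_neg at hcon
      have := alpha_anti_s η hr₂ hls₁ hs₂ hcon hη1
      rw [ha2] at this; linarith
    -- step C: l * s₁ ≤ s₂
    set m := s₂ / s₁ with hm_def
    have hm1 : 1 ≤ m := (one_le_div hs₁).2 hs12
    have hms : m * s₁ = s₂ := div_mul_cancel₀ s₂ (ne_of_gt hs₁)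
    have hmr₁ : 0 < m * r₁ := by positivity
    have hCle : dotNR ζ (betaVec (m * r₁) s₂) ≤ 2 * Real.pi := by
      have := beta_scale_le ζ hr₁ hs₁ hm1
      rw [hms, hb1] at this; exact this
    have hC : r₂ ≤ m * r₁ := by
      by_contra hcon
      push_neg at hcon
      have := beta_anti_r ζ hs₂ hmr₁ hr₂ hcon hζ1
      rw [hb2] at this; linarith
    have hlm : l * s₁ ≤ s₂ := by
      have hlem : l ≤ m := by
        rw [hl_def, div_le_iff₀ hr₁]
        linarith [hC]
      calc l * s₁ ≤ m * s₁ := by nlinarith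
        _ = s₂ := hms
    have hseq : s₂ = l * s₁ := le_antisymm hB hlm
    have hml : m = l := by
      rw [hm_def, hseq]
      field_simp
    rcases hcond with hη3 | hζ3
    · have := alpha_scale_lt η hr₁ hs₁ hl1 hη3
      rw [hlr, ha1, ← hseq, ha2] at this
      linarith
    · have hm1' : 1 < m := by rw [hml]; exact hl1
      have := beta_scale_lt ζ hr₁ hs₁ hm1' hζ3
      rw [hms, hb1] at this
      have h2' : dotNR ζ (betaVec (m * r₁) s₂) = 2 * Real.pi := by
        rw [hml, hlr, hb2]
      linarith [this, h2'.ge]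

end Stmt18Aux

/-- For (η,ζ) ∈ K, there is at most one point of Δ₃ at which both η·α and ζ·β equal 2π. -/
theorem stmt_18 (η ζ : Fin 6 → ℕ) (hK : (η, ζ) ∈ Kset)
    (r₁ s₁ r₂ s₂ : ℝ) (h1 : (r₁, s₁) ∈ Delta3) (h2 : (r₂, s₂) ∈ Delta3)
    (ha1 : dotNR η (alphaVec r₁ s₁) = 2 * Real.pi)
    (hb1 : dotNR ζ (betaVec r₁ s₁) = 2 * Real.pi)
    (ha2 : dotNR η (alphaVec r₂ s₂) = 2 * Real.pi)
    (hb2 : dotNR ζ (betaVec r₂ s₂) = 2 * Real.pi) :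
    (r₁, s₁) = (r₂, s₂) := by
  obtain ⟨hS, hR, _, hcond⟩ := hK
  have hη1 := Stmt18Aux.extract1 η hS.2.2.1
  have hζ1 := Stmt18Aux.extract2 ζ hR.2.2.2.1
  have hcond' : (η 0 ≠ 0 ∨ η 3 ≠ 0 ∨ η 4 ≠ 0) ∨ (ζ 0 ≠ 0 ∨ ζ 3 ≠ 0 ∨ ζ 4 ≠ 0) :=
    hcond.imp (Stmt18Aux.extract3 η) (Stmt18Aux.extract3 ζ)
  rcases le_total r₁ r₂ with h | h
  · obtain ⟨e1, e2⟩ := Stmt18Aux.key η ζ hη1 hζ1 hcond' h1 h2 ha1 hb1 ha2 hb2 h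
    rw [e1, e2]
  · obtain ⟨e1, e2⟩ := Stmt18Aux.key η ζ hη1 hζ1 hcond' h2 h1 ha2 hb2 ha1 hb1 h
    rw [e1, e2]

end
end
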